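/- arXiv:2311.07382 — 3 statements merged into one kernel-verified Lean document; each statement's English description precedes it below -/
import Mathlib

section
/- Let w be a binary word of length n*k (indexed cyclically) and D a cylindric diagram on the cylinder C_{x,y} with outer boundary word w. If removing a removable k-ribbon R from D corresponds to exchanging a 1 at position t+k with a 0 at position t in w (with t < t+k <= length of w), then the k-pairing constant invar_k changes parity exactly when the height of R (number of rows R occupies minus 1) is odd. -/
/-!
STATEMENT 4: Removing a `k`-ribbon (exchanging a `1` at position `t+k` with a
`0` at position `t` of the boundary word) changes the parity of the
`k`-pairing constant `invar_k` exactly when the height of the ribbon (the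
number of `1`'s at positions strictly between `t` and `t+k`) is odd.
The boundary word is a binary word of length `N = n*k`, and for residues
`i, j` the number `pcount` counts pairs of positions `a < b` carrying `1`'s
with `a ≡ i`, `b ≡ j (mod k)`.
-/

/-- `pcount k N w i j` = number of pairs of positions `a < b` (in `[0, N)`)
with `w a = w b = 1`, `a ≡ i (mod k)` and `b ≡ j (mod k)`. -/
def pcount (k N : ℕ) (w : ℕ → Bool) (i j : ℕ) : ℕ :=
  ((Finset.range N ×ˢ Finset.range N).filter
    (fun ab => ab.1 < ab.2 ∧ w ab.1 = true ∧ w ab.2 = true ∧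
      ab.1 % k = i ∧ ab.2 % k = j)).card

/-- The `k`-pairing constant `invar_k(w) = ⌊ ∑_{i<j} (p_{ij} - p_{ji}) / 2 ⌋`. -/
def invar (k N : ℕ) (w : ℕ → Bool) : ℤ :=
  Int.fdiv
    (∑ i ∈ Finset.range k, ∑ j ∈ Finset.range k,
      if i < j then (pcount k N w i j : ℤ) - (pcount k N w j i : ℤ) else 0) 2

/-- The parity `ε_k(w) ∈ {0,1}` of the `k`-pairing constant. -/
def eps (k N : ℕ) (w : ℕ → Bool) : ℤ := invar k N w % 2

/-- sign comparing residues mod `k` -/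
def sgn2 (k a b : ℕ) : ℤ := if a % k < b % k then 1 else if b % k < a % k then -1 else 0

def Gk (k a b : ℕ) : ℤ := if a < b then sgn2 k a b else 0

def ew (w : ℕ → Bool) (a : ℕ) : ℤ := if w a then 1 else 0

def Sk (k N : ℕ) (w : ℕ → Bool) : ℤ :=
  ∑ a ∈ Finset.range N, ∑ b ∈ Finset.range N, ew w a * ew w b * Gk k a b

lemma double_single (k u v : ℕ) (hu : u ∈ Finset.range k) (hv : v ∈ Finset.range k) :
    (∑ i ∈ Finset.range k, ∑ j ∈ Finset.range k,
      if i < j ∧ u = i ∧ v = j then (1:ℤ) else 0) = if u < v then 1 else 0 := by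
  rw [Finset.sum_eq_single u]
  · rw [Finset.sum_eq_single v]
    · simp
    · intro j _ hj
      simp only [ite_eq_right_iff]
      rintro ⟨-, -, rfl⟩; exact absurd rfl hj
    · intro h; exact absurd hv h
  · intro i _ hi
    apply Finset.sum_eq_zero
    intro j _
    simp only [ite_eq_right_iff]
    rintro ⟨-, rfl, -⟩; exact absurd rfl hi
  · intro h; exact absurd hu h

lemma inner_eval (k : ℕ) (hk : 0 < k) (w : ℕ → Bool) (a b : ℕ) :
    (∑ i ∈ Finset.range k, ∑ j ∈ Finset.range k,
      if i < j then
        (if a < b ∧ w a = true ∧ w b = true ∧ a % k = i ∧ b % k = j then (1:ℤ) else 0)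
        - (if a < b ∧ w a = true ∧ w b = true ∧ a % k = j ∧ b % k = i then (1:ℤ) else 0)
      else 0) = ew w a * ew w b * Gk k a b := by
  have hma : a % k ∈ Finset.range k := Finset.mem_range.mpr (Nat.mod_lt _ hk)
  have hmb : b % k ∈ Finset.range k := Finset.mem_range.mpr (Nat.mod_lt _ hk)
  by_cases h1 : a < b
  · by_cases h2 : w a = true
    · by_cases h3 : w b = true
      · have e1 : ∀ i j : ℕ,
            (if i < j then
              (if a < b ∧ w a = true ∧ w b = true ∧ a % k = i ∧ b % k = j then (1:ℤ) else 0)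
              - (if a < b ∧ w a = true ∧ w b = true ∧ a % k = j ∧ b % k = i then (1:ℤ) else 0)
            else 0)
            = (if i < j ∧ a % k = i ∧ b % k = j then (1:ℤ) else 0)
              - (if i < j ∧ b % k = i ∧ a % k = j then (1:ℤ) else 0) := by
          intro i j
          by_cases hij : i < j <;> simp [hij, h1, h2, h3, and_comm]
        simp only [e1]
        rw [Finset.sum_congr rfl (fun i _ => Finset.sum_sub_distrib _ _),
          Finset.sum_sub_distrib, double_single k _ _ hma hmb, double_single k _ _ hmb hma]
        simp only [ew, Gk, sgn2, h1, h2, h3, if_true]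
        split_ifs <;> omega
      · simp [h1, h2, h3, ew, Gk]
    · simp [h1, h2, ew, Gk]
  · simp [h1, ew, Gk]

lemma lemA (k N : ℕ) (hk : 0 < k) (w : ℕ → Bool) :
    (∑ i ∈ Finset.range k, ∑ j ∈ Finset.range k,
      if i < j then (pcount k N w i j : ℤ) - (pcount k N w j i : ℤ) else 0) = Sk k N w := by
  have hp : ∀ i j, (pcount k N w i j : ℤ)
      = ∑ a ∈ Finset.range N, ∑ b ∈ Finset.range N,
          if a < b ∧ w a = true ∧ w b = true ∧ a % k = i ∧ b % k = j then (1:ℤ) else 0 := by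
    intro i j
    rw [pcount, Finset.card_filter]
    push_cast
    rw [Finset.sum_product]
  have key : ∀ i j : ℕ, (if i < j then (pcount k N w i j : ℤ) - (pcount k N w j i : ℤ) else 0)
      = ∑ a ∈ Finset.range N, ∑ b ∈ Finset.range N,
          (if i < j then
            (if a < b ∧ w a = true ∧ w b = true ∧ a % k = i ∧ b % k = j then (1:ℤ) else 0)
            - (if a < b ∧ w a = true ∧ w b = true ∧ a % k = j ∧ b % k = i then (1:ℤ) else 0)
          else 0) := by
    intro i j
    by_cases hij : i < j
    · simp only [hij, if_true, hp, ← Finset.sum_sub_distrib]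
    · simp [hij]
  simp only [key]
  conv_lhs => enter [2, i]; rw [Finset.sum_comm]
  rw [Finset.sum_comm]
  conv_lhs => enter [2, a, 2, i]; rw [Finset.sum_comm]
  conv_lhs => enter [2, a]; rw [Finset.sum_comm]
  unfold Sk
  exact Finset.sum_congr rfl fun a _ => Finset.sum_congr rfl fun b _ => inner_eval k hk w a b

theorem tst : True := trivial

lemma mod_ne (k t c : ℕ) (h1 : t < c) (h2 : c < t + k) : c % k ≠ t % k := by
  intro h
  have hdvd : k ∣ c - t := (Nat.modEq_iff_dvd' (le_of_lt h1)).mp h.symm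
  have := Nat.le_of_dvd (by omega) hdvd
  omega

lemma Gdiff (k t c : ℕ) :
    Gk k t c - Gk k (t + k) c + (Gk k c t - Gk k c (t + k))
      = if t < c ∧ c < t + k then 2 * sgn2 k t c else 0 := by
  have hmod : (t + k) % k = t % k := Nat.add_mod_right t k
  rcases eq_or_ne c t with rfl | hct
  · simp [Gk, sgn2, hmod]
  rcases eq_or_ne c (t + k) with rfl | hctk
  · simp [Gk, sgn2, hmod]
  by_cases h1 : t < c <;> by_cases h2 : c < t + k <;>
    simp only [Gk, sgn2, hmod, h1, h2, and_true, and_false, true_and, false_and,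
      if_true, if_false] <;> split_ifs <;> omega

lemma bilin (N : ℕ) (e1 e2 : ℕ → ℤ) (G : ℕ → ℕ → ℤ) :
    ∑ a ∈ Finset.range N, ∑ b ∈ Finset.range N, (e1 a + e2 a) * (e1 b + e2 b) * G a b
    = (∑ a ∈ Finset.range N, ∑ b ∈ Finset.range N, e1 a * e1 b * G a b)
      + (∑ a ∈ Finset.range N, e2 a * (∑ b ∈ Finset.range N, e1 b * G a b))
      + (∑ a ∈ Finset.range N, ∑ b ∈ Finset.range N, e2 b * (e1 a * G a b))
      + (∑ a ∈ Finset.range N, e2 a * (∑ b ∈ Finset.range N, e2 b * G a b)) := by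
  simp only [Finset.mul_sum, ← Finset.sum_add_distrib]
  exact Finset.sum_congr rfl fun a _ => Finset.sum_congr rfl fun b _ => by ring

lemma sum_delta (N t s : ℕ) (htN : t < N) (hsN : s < N) (f : ℕ → ℤ) :
    ∑ a ∈ Finset.range N, ((if a = t then (1:ℤ) else 0) - (if a = s then 1 else 0)) * f a
    = f t - f s := by
  have pt : ∀ a, ((if a = t then (1:ℤ) else 0) - (if a = s then 1 else 0)) * f a
      = (if a = t then f a else 0) - (if a = s then f a else 0) := fun a => by
    split_ifs <;> ring
  simp only [pt]
  rw [Finset.sum_sub_distrib, Finset.sum_ite_eq', Finset.sum_ite_eq']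
  simp [Finset.mem_range.mpr htN, Finset.mem_range.mpr hsN]

lemma lemB (k N : ℕ) (hk : 0 < k) (w : ℕ → Bool) (t : ℕ) (ht : t + k < N)
    (h0 : w t = false) (h1 : w (t + k) = true) :
    Sk k N (fun a => if a = t then true else if a = t + k then false else w a)
      = Sk k N w
        + 2 * ∑ c ∈ (Finset.Ioo t (t + k)).filter (fun c => w c = true), sgn2 k t c := by
  have htk : ¬ (t = t + k) := by omega
  have htN : t < N := by omega
  have htkN : t + k < N := ht
  set d : ℕ → ℤ := fun a => (if a = t then (1:ℤ) else 0) - (if a = t + k then 1 else 0) with hd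
  have he : ∀ a, ew (fun a => if a = t then true else if a = t + k then false else w a) a
      = ew w a + d a := by
    intro a
    by_cases h : a = t
    · subst h; simp [ew, h0, htk, hd, hk.ne']
    · by_cases h' : a = t + k
      · subst h'; simp [ew, h1, h, hd]
      · simp [ew, h, h', hd]
  unfold Sk
  simp only [he]
  rw [bilin]
  -- kill the d*d term
  have hdd : (∑ a ∈ Finset.range N, d a * (∑ b ∈ Finset.range N, d b * Gk k a b)) = 0 := by
    rw [sum_delta N t (t + k) htN htkN (fun a => ∑ b ∈ Finset.range N, d b * Gk k a b),
      sum_delta N t (t + k) htN htkN (fun b => Gk k t b),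
      sum_delta N t (t + k) htN htkN (fun b => Gk k (t + k) b)]
    have g1 : Gk k t t = 0 := by simp [Gk]
    have g2 : Gk k t (t + k) = 0 := by simp [Gk, sgn2, Nat.add_mod_right]
    have g3 : Gk k (t + k) t = 0 := by simp [Gk]
    have g4 : Gk k (t + k) (t + k) = 0 := by simp [Gk]
    rw [g1, g2, g3, g4]; ring
  rw [hdd,
    sum_delta N t (t + k) htN htkN (fun a => ∑ b ∈ Finset.range N, ew w b * Gk k a b)]
  -- rewrite the third term
  have hT2 : (∑ a ∈ Finset.range N, ∑ b ∈ Finset.range N, d b * (ew w a * Gk k a b))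
      = ∑ a ∈ Finset.range N, (ew w a * Gk k a t - ew w a * Gk k a (t + k)) := by
    refine Finset.sum_congr rfl fun a _ => ?_
    exact sum_delta N t (t + k) htN htkN (fun b => ew w a * Gk k a b)
  rw [hT2]
  -- combine everything into one sum over c
  have hcomb :
      (∑ b ∈ Finset.range N, ew w b * Gk k t b)
        - (∑ b ∈ Finset.range N, ew w b * Gk k (t + k) b)
        + ∑ a ∈ Finset.range N, (ew w a * Gk k a t - ew w a * Gk k a (t + k))
      = ∑ c ∈ Finset.range N,
          ew w c * (Gk k t c - Gk k (t + k) c + (Gk k c t - Gk k c (t + k))) := by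
    rw [← Finset.sum_sub_distrib, ← Finset.sum_add_distrib]
    exact Finset.sum_congr rfl fun c _ => by ring
  have hfinal :
      (∑ c ∈ Finset.range N,
          ew w c * (Gk k t c - Gk k (t + k) c + (Gk k c t - Gk k c (t + k))))
      = 2 * ∑ c ∈ (Finset.Ioo t (t + k)).filter (fun c => w c = true), sgn2 k t c := by
    have step1 : ∀ c, ew w c * (Gk k t c - Gk k (t + k) c + (Gk k c t - Gk k c (t + k)))
        = if c ∈ Finset.Ioo t (t + k) then ew w c * (2 * sgn2 k t c) else 0 := by
      intro c
      rw [Gdiff]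
      simp only [Finset.mem_Ioo]
      split_ifs <;> ring
    simp only [step1]
    rw [Finset.sum_ite_mem,
      Finset.inter_eq_right.mpr (fun c hc => Finset.mem_range.mpr
        (lt_trans (Finset.mem_Ioo.mp hc).2 ht)),
      Finset.sum_filter, Finset.mul_sum]
    refine Finset.sum_congr rfl fun c _ => ?_
    by_cases hw : w c = true <;> simp [ew, hw]
  calc (∑ a ∈ Finset.range N, ∑ b ∈ Finset.range N, ew w a * ew w b * Gk k a b)
        + ((∑ b ∈ Finset.range N, ew w b * Gk k t b)
          - ∑ b ∈ Finset.range N, ew w b * Gk k (t + k) b)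
        + (∑ a ∈ Finset.range N, (ew w a * Gk k a t - ew w a * Gk k a (t + k)))
        + 0
      = (∑ a ∈ Finset.range N, ∑ b ∈ Finset.range N, ew w a * ew w b * Gk k a b)
        + ((∑ b ∈ Finset.range N, ew w b * Gk k t b)
          - (∑ b ∈ Finset.range N, ew w b * Gk k (t + k) b)
          + ∑ a ∈ Finset.range N, (ew w a * Gk k a t - ew w a * Gk k a (t + k))) := by ring
    _ = _ := by rw [hcomb, hfinal]

lemma fdiv_shift (a b : ℤ) : (a + 2 * b).fdiv 2 = a.fdiv 2 + b := by
  rw [Int.fdiv_eq_ediv_of_nonneg _ (by norm_num), Int.fdiv_eq_ediv_of_nonneg _ (by norm_num),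
    mul_comm, Int.add_mul_ediv_right _ _ (by norm_num : (2:ℤ) ≠ 0)]

theorem ribbon_removal_parity (n k N : ℕ) (hk : 0 < k) (hN : N = n * k)
    (w : ℕ → Bool) (t : ℕ) (ht : t + k < N)
    (h0 : w t = false) (h1 : w (t + k) = true) :
    eps k N (fun a => if a = t then true else if a = t + k then false else w a)
        = eps k N w
      ↔ Even (((Finset.Ioo t (t + k)).filter (fun a => w a = true)).card) := by
  set F := (Finset.Ioo t (t + k)).filter (fun a => w a = true) with hF
  set M := ∑ c ∈ F, sgn2 k t c with hM
  have hparM : M % 2 = (F.card : ℤ) % 2 := by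
    rw [hM, Finset.sum_int_mod]
    have hone : ∀ c ∈ F, sgn2 k t c % 2 = 1 := by
      intro c hc
      rw [hF, Finset.mem_filter, Finset.mem_Ioo] at hc
      have hne := mod_ne k t c hc.1.1 hc.1.2
      unfold sgn2
      split_ifs <;> omega
    rw [Finset.sum_congr rfl hone]
    simp
  have hinv : invar k N (fun a => if a = t then true else if a = t + k then false else w a)
      = invar k N w + M := by
    unfold invar
    rw [lemA k N hk _, lemA k N hk w, lemB k N hk w t ht h0 h1, ← hF, ← hM, fdiv_shift]
  simp only [eps, hinv]
  rw [Nat.even_iff]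
  omega
end

section
/- Let D be a cylindric diagram on C_{x,y} such that (D,k) is a good pair and D can be tiled by k-ribbons with empty k-core. Then for every such ribbon tiling of D, the total height of the ribbons has the same parity; i.e., the parity of the sum of ribbon heights is independent of the tiling. -/
/-!
STATEMENT 5: For a good pair `(D,k)`, the parity of the total height of any
`k`-ribbon tiling of `D` (with empty core, i.e. a chain of cylindric diagrams
from the inner boundary `mu` all the way to the outer boundary `lam`) is
independent of the tiling.

Cylindric diagrams on `C_{x,y}` are encoded by boundary loops `f : ℤ → ℤ`
(weakly increasing, `f (i+y) = f i + x`); row `i` of the region between `ν`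
and `ρ` consists of the columns `ν i < j ≤ ρ i`.  The `1` of row `i` in the
boundary word of a loop `f` sits at position `i + f i` (up to a global shift),
so the number of `1`'s of `lam` in the residue class `j (mod k)` is
`yCnt y lam k j`, and `(D,k)` is a good pair when each such count is either
congruent to `y (mod 2)`, or zero, or equal to the odd number `(x+y)/k`.
-/

/-- Row `i` of the region between `ν` (inner) and `ρ` (outer) is occupied. -/
def RowOcc (ν ρ : ℤ → ℤ) (i : ℤ) : Prop := ν i < ρ i

/-- The region between `ν` and `ρ` is a `k`-ribbon on `C_{x,y}`: it has `k`
boxes in a fundamental domain, contains no `2×2` block, and is connected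
(consecutive occupied rows overlap in exactly one column and the occupied rows
form a cyclic interval). -/
def IsKRibbon (x y k : ℕ) (ν ρ : ℤ → ℤ) : Prop :=
  (∀ i, ν i ≤ ρ i) ∧
  (∑ i ∈ Finset.Ico (0 : ℤ) (y : ℤ), (ρ i - ν i)) = k ∧
  -- no 2×2 block
  (∀ i, ρ i - 1 ≤ ν (i + 1)) ∧
  -- consecutive occupied rows share a column
  (∀ i, RowOcc ν ρ i → RowOcc ν ρ (i + 1) → ν (i + 1) < ρ i) ∧
  -- occupied rows form a cyclic interval
  (∀ i j : ℤ, i ≤ j → j < i + y → RowOcc ν ρ i → RowOcc ν ρ j →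
    ∀ m : ℤ, i ≤ m → m ≤ j →
      (RowOcc ν ρ m ∨ ∀ t : ℤ, j ≤ t → t ≤ i + y → RowOcc ν ρ t))

/-- The height of a ribbon: `y` for a loop ribbon, and the number of occupied
rows minus one otherwise. -/
noncomputable def ribbonHeight (y : ℕ) (ν ρ : ℤ → ℤ) : ℕ :=
  open scoped Classical in
  if ∀ i, ν (i + 1) = ρ i - 1 then y
  else ((Finset.Ico (0 : ℤ) (y : ℤ)).filter (fun i => ν i < ρ i)).card - 1

/-- A `k`-ribbon tiling of the diagram `mu ⊆ lam` with empty core: a chain of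
boundary loops from `mu` to `lam`, each step adding a removable `k`-ribbon. -/
def IsTiling (x y k : ℕ) (mu lam : ℤ → ℤ) (s : ℕ) (c : ℕ → ℤ → ℤ) : Prop :=
  c 0 = mu ∧ c s = lam ∧
  (∀ m ≤ s, (∀ i, c m i ≤ c m (i + 1)) ∧ (∀ i, c m (i + y) = c m i + x)) ∧
  (∀ m < s, IsKRibbon x y k (c m) (c (m + 1)))

/-- Total height of a tiling. -/
noncomputable def totalHeight (y : ℕ) (s : ℕ) (c : ℕ → ℤ → ℤ) : ℕ :=
  ∑ m ∈ Finset.range s, ribbonHeight y (c m) (c (m + 1))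

/-- The number of `1`'s of the boundary word of `lam` whose index is `≡ j (mod k)`. -/
noncomputable def yCnt (y : ℕ) (lam : ℤ → ℤ) (k : ℕ) (j : ℤ) : ℕ :=
  ((Finset.Ico (0 : ℤ) (y : ℤ)).filter (fun i => (i + lam i) % (k : ℤ) = j)).card

/-- `(D, k)` is a good pair. -/
def GoodPair (x y k : ℕ) (lam : ℤ → ℤ) : Prop :=
  ∀ j ∈ Finset.Ico (0 : ℤ) (k : ℤ),
    yCnt y lam k j % 2 = y % 2 ∨ yCnt y lam k j = 0 ∨
      (yCnt y lam k j = (x + y) / k ∧ Odd ((x + y) / k))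


namespace GPT

lemma zsub : ∀ a b : ZMod 2, a - b = a + b := by decide
lemma zneg : ∀ a : ZMod 2, -a = a := by decide

/-- parity of the floor quotient -/
def fl (N z : ℤ) : ZMod 2 := ((z / N : ℤ) : ZMod 2)

/-- different-class indicator -/
def chi {y : ℕ} (k : ℤ) (B₀ : Fin y → ℤ) (i i' : Fin y) : ZMod 2 :=
  if B₀ i % k = B₀ i' % k then 0 else 1

def Pairs (y : ℕ) : Finset (Fin y × Fin y) := Finset.univ.filter fun p => p.1 < p.2

def Phi {y : ℕ} (N k : ℤ) (B₀ B : Fin y → ℤ) : ZMod 2 :=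
  ∑ p ∈ Pairs y, chi k B₀ p.1 p.2 * fl N (B p.2 - B p.1)

lemma chi_symm {y : ℕ} (k : ℤ) (B₀ : Fin y → ℤ) (i i' : Fin y) :
    chi k B₀ i i' = chi k B₀ i' i := by
  unfold chi; by_cases h : B₀ i % k = B₀ i' % k
  · rw [if_pos h, if_pos h.symm]
  · rw [if_neg h, if_neg (fun h' => h h'.symm)]

lemma ediv_eq_of (N z q r : ℤ) (hN : 0 < N) (h : z = N * q + r) (h0 : 0 ≤ r) (h1 : r < N) :
    z / N = q :=
  ((Int.ediv_emod_unique hN).2 ⟨by omega, h0, h1⟩).1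

lemma emod_nonneg' (N z : ℤ) (hN : 0 < N) : 0 ≤ z % N := Int.emod_nonneg z hN.ne'
lemma emod_lt' (N z : ℤ) (hN : 0 < N) : z % N < N := Int.emod_lt_of_pos z hN

lemma fl_sub_k (N k d : ℤ) (hN : 0 < N) (hk0 : 0 < k) (hkN : k ≤ N) :
    fl N (d - k) = fl N d + (if d % N < k then 1 else 0) := by
  have hd := Int.mul_ediv_add_emod d N
  have h0 := emod_nonneg' N d hN
  have h1 := emod_lt' N d hN
  unfold fl
  by_cases h : d % N < k
  · rw [if_pos h]
    have : (d - k) / N = d / N - 1 :=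
      ediv_eq_of N (d - k) (d / N - 1) (d % N - k + N) hN (by linear_combination -hd) (by omega)
        (by omega)
    rw [this]; push_cast
    rw [zsub]
  · rw [if_neg h]
    have : (d - k) / N = d / N :=
      ediv_eq_of N (d - k) (d / N) (d % N - k) hN (by linear_combination -hd) (by omega) (by omega)
    rw [this]; ring

lemma fl_add_k (N k e : ℤ) (hN : 0 < N) (hk0 : 0 < k) (hkN : k ≤ N) :
    fl N (e + k) = fl N e + (if N - k ≤ e % N then 1 else 0) := by
  have hd := Int.mul_ediv_add_emod e N
  have h0 := emod_nonneg' N e hN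
  have h1 := emod_lt' N e hN
  unfold fl
  by_cases h : N - k ≤ e % N
  · rw [if_pos h]
    have : (e + k) / N = e / N + 1 :=
      ediv_eq_of N (e + k) (e / N + 1) (e % N + k - N) hN (by linear_combination -hd) (by omega)
        (by omega)
    rw [this]; push_cast; ring
  · rw [if_neg h]
    have : (e + k) / N = e / N :=
      ediv_eq_of N (e + k) (e / N) (e % N + k) hN (by linear_combination -hd) (by omega) (by omega)
    rw [this]; ring

lemma fl_neg (N z : ℤ) (hN : 0 < N) (h : z % N ≠ 0) : fl N (-z) = fl N z + 1 := by
  have hd := Int.mul_ediv_add_emod z N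
  have h0 := emod_nonneg' N z hN
  have h1 := emod_lt' N z hN
  unfold fl
  have : (-z) / N = -(z / N) - 1 :=
    ediv_eq_of N (-z) (-(z / N) - 1) (N - z % N) hN (by linear_combination hd) (by omega)
      (by omega)
  rw [this]; push_cast
  have h2 : (2 : ZMod 2) = 0 := by decide
  linear_combination (-(((z / N : ℤ) : ZMod 2))) * h2 - h2

lemma fl_add_mul (N z m : ℤ) (hN : 0 < N) : fl N (z + N * m) = fl N z + (m : ZMod 2) := by
  unfold fl
  rw [show z + N * m = z + m * N by ring, Int.add_mul_ediv_right _ _ hN.ne']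
  push_cast; ring

lemma emod_zero_dvd (N z : ℤ) : z % N = 0 ↔ N ∣ z :=
  ⟨Int.dvd_of_emod_eq_zero, Int.emod_eq_zero_of_dvd⟩

/-- if `k ∣ N` and `k ∣ z` then `k ∣ z % N` -/
lemma dvd_emod (N k z : ℤ) (hdvd : k ∣ N) (h : k ∣ z) : k ∣ z % N := by
  have : z % N = z - N * (z / N) := by linear_combination (Int.mul_ediv_add_emod z N)
  rw [this]; exact dvd_sub h (Dvd.dvd.mul_right hdvd _)

end GPT

namespace GPT
lemma emod_eq_of (N z q r : ℤ) (hN : 0 < N) (h : z = N * q + r) (h0 : 0 ≤ r) (h1 : r < N) :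
    z % N = r :=
  ((Int.ediv_emod_unique (a := z) (b := N) (r := r) (q := q) hN).2 ⟨by omega, h0, h1⟩).2

lemma neg_emod_nonzero (N e : ℤ) (hN : 0 < N) (h : e % N ≠ 0) :
    (-e) % N = N - e % N := by
  have hd := Int.mul_ediv_add_emod e N
  have h0 := emod_nonneg' N e hN
  have h1 := emod_lt' N e hN
  exact emod_eq_of N (-e) (-(e / N) - 1) (N - e % N) hN (by linear_combination hd)
    (by omega) (by omega)

lemma emod_sub_cancel' (N a b : ℤ) : (a - b) % N = ((a % N) - (b % N)) % N := by
  rw [Int.sub_emod]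
end GPT

namespace GPT

lemma const_of_step {α : Sort*} (W : ℤ → α) (h : ∀ a, W a = W (a + 1)) (a b : ℤ) :
    W a = W b := by
  have key : ∀ (c : ℤ) (n : ℕ), W c = W (c + n) := by
    intro c n
    induction n with
    | zero => simp
    | succ n ih =>
      calc W c = W (c + n) := ih
        _ = W (c + n + 1) := h _
        _ = W (c + (n + 1 : ℕ)) := by congr 1; push_cast; ring
  rcases le_total a b with hab | hab
  · have : b = a + ((b - a).toNat : ℤ) := by omega
    rw [this] at *
    exact key a _
  · have : a = b + ((a - b).toNat : ℤ) := by omega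
    rw [this] at *
    exact (key b _).symm

lemma Ico_insert_left (a : ℤ) (y : ℕ) (hy : 0 < y) :
    Finset.Ico a (a + y) = insert a (Finset.Ico (a + 1) (a + y)) := by
  ext i
  simp only [Finset.mem_Ico, Finset.mem_insert]
  omega

lemma Ico_insert_right (a : ℤ) (y : ℕ) (hy : 0 < y) :
    Finset.Ico (a + 1) (a + 1 + y) = insert (a + y) (Finset.Ico (a + 1) (a + y)) := by
  ext i
  simp only [Finset.mem_Ico, Finset.mem_insert]
  omega

lemma not_mem_left (a : ℤ) (b : ℤ) : a ∉ Finset.Ico (a + 1) b := by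
  simp only [Finset.mem_Ico]; omega

lemma not_mem_right (a : ℤ) (y : ℕ) : a + y ∉ Finset.Ico (a + 1) (a + y) := by
  simp only [Finset.mem_Ico]; omega

/-- sums of a `y`-periodic function over any window of length `y` agree -/
lemma per_sum {M : Type*} [AddCommMonoid M] (g : ℤ → M) (y : ℕ) (hy : 0 < y)
    (hg : ∀ i, g (i + y) = g i) (a b : ℤ) :
    ∑ i ∈ Finset.Ico a (a + y), g i = ∑ i ∈ Finset.Ico b (b + y), g i := by
  refine const_of_step (fun a => ∑ i ∈ Finset.Ico a (a + y), g i) ?_ a b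
  intro c
  show ∑ i ∈ Finset.Ico c (c + y), g i = ∑ i ∈ Finset.Ico (c+1) (c + 1 + y), g i
  rw [Ico_insert_left c y hy, Ico_insert_right c y hy,
    Finset.sum_insert (not_mem_left c (c + y)), Finset.sum_insert (not_mem_right c y),
    hg c]

/-- images of a `y`-periodic function over any window of length `y` agree -/
lemma per_image {β : Type*} [DecidableEq β] (g : ℤ → β) (y : ℕ) (hy : 0 < y)
    (hg : ∀ i, g (i + y) = g i) (a b : ℤ) :
    (Finset.Ico a (a + y)).image g = (Finset.Ico b (b + y)).image g := by
  refine const_of_step (fun a => (Finset.Ico a (a + y)).image g) ?_ a b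
  intro c
  show (Finset.Ico c (c + y)).image g = (Finset.Ico (c+1) (c + 1 + y)).image g
  rw [Ico_insert_left c y hy, Ico_insert_right c y hy, Finset.image_insert,
    Finset.image_insert, hg c]

/-- monotonicity from step monotonicity -/
lemma mono_le (f : ℤ → ℤ) (hf : ∀ i, f i ≤ f (i + 1)) : ∀ i j : ℤ, i ≤ j → f i ≤ f j := by
  intro i j hij
  have key : ∀ (n : ℕ), f i ≤ f (i + n) := by
    intro n
    induction n with
    | zero => simp
    | succ n ih =>
      calc f i ≤ f (i + n) := ih
        _ ≤ f (i + n + 1) := hf _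
        _ = f (i + (n + 1 : ℕ)) := by congr 1; push_cast; ring
  have : j = i + ((j - i).toNat : ℤ) := by omega
  rw [this]
  exact key _

/-- positions `i + f i` are strictly monotone -/
lemma pos_strict (f : ℤ → ℤ) (hf : ∀ i, f i ≤ f (i + 1)) :
    ∀ i j : ℤ, i < j → i + f i < j + f j := by
  intro i j hij
  have := mono_le f hf i j (le_of_lt hij)
  omega

/-- injectivity mod `N` of positions within a window -/
lemma pos_inj (x y : ℕ) (N : ℤ) (hN : N = (x:ℤ) + y) (f : ℤ → ℤ)
    (hf : ∀ i, f i ≤ f (i + 1)) (hfp : ∀ i, f (i + y) = f i + x) (c : ℤ)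
    (i j : ℤ) (hi : i ∈ Finset.Ico c (c + (y:ℤ))) (hj : j ∈ Finset.Ico c (c + (y:ℤ)))
    (h : (i + f i) % N = (j + f j) % N) : i = j := by
  simp only [Finset.mem_Ico] at hi hj
  have hN0 : 0 < N := by omega
  by_contra hne
  -- wlog via cases
  rcases lt_or_gt_of_ne hne with hlt | hlt
  · have h1 : i + f i < j + f j := pos_strict f hf i j hlt
    have h2 : j + f j < i + f i + N := by
      have : j < i + y := by omega
      have hmono := mono_le f hf j (i + y) (by omega)
      have : j + f j ≤ i + y + f (i + y) - 1 := by
        have := pos_strict f hf j (i + y) (by omega)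
        omega
      rw [hfp i] at this
      omega
    have hdvd : N ∣ (j + f j - (i + f i)) :=
      Int.dvd_of_emod_eq_zero (Int.emod_eq_emod_iff_emod_sub_eq_zero.mp h.symm)
    have := Int.le_of_dvd (by omega) hdvd
    omega
  · have h1 : j + f j < i + f i := pos_strict f hf j i hlt
    have h2 : i + f i < j + f j + N := by
      have hmono := mono_le f hf i (j + y) (by omega)
      have : i + f i ≤ j + y + f (j + y) - 1 := by
        have := pos_strict f hf i (j + y) (by omega)
        omega
      rw [hfp j] at this
      omega
    have hdvd : N ∣ (i + f i - (j + f j)) :=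
      Int.dvd_of_emod_eq_zero (Int.emod_eq_emod_iff_emod_sub_eq_zero.mp h)
    have := Int.le_of_dvd (by omega) hdvd
    omega

/-- residue set of the boundary word of `f` -/
noncomputable def resSet (N : ℤ) (y : ℕ) (f : ℤ → ℤ) : Finset ℤ :=
  (Finset.Ico (0:ℤ) (y:ℤ)).image fun i => (i + f i) % N

lemma resSet_window (x y : ℕ) (hy : 0 < y) (N : ℤ) (hN : N = (x:ℤ) + y) (f : ℤ → ℤ)
    (hfp : ∀ i, f (i + y) = f i + x) (c : ℤ) :
    resSet N y f = (Finset.Ico c (c + (y:ℤ))).image (fun i => (i + f i) % N) := by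
  unfold resSet
  have hper : ∀ i : ℤ, ((i + (y:ℤ)) + f (i + y)) % N = (i + f i) % N := by
    intro i
    rw [hfp i, show i + y + (f i + x) = (i + f i) + N * 1 by omega, Int.add_mul_emod_self_left]
  have := per_image (fun i => (i + f i) % N) y hy hper 0 c
  simpa using this

/-- telescoping sum over an integer interval -/
lemma telescope_Ico (g : ℤ → ℤ) (a b : ℤ) (hab : a ≤ b) :
    ∑ i ∈ Finset.Ico a b, (g (i + 1) - g i) = g b - g a := by
  have key : ∀ (n : ℕ), ∑ i ∈ Finset.Ico a (a + (n:ℤ)), (g (i + 1) - g i) = g (a + n) - g a := by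
    intro n
    induction n with
    | zero => simp
    | succ n ih =>
      have hsplit : Finset.Ico a (a + ((n:ℤ) + 1)) = insert (a + n) (Finset.Ico a (a + (n:ℤ))) := by
        ext i
        simp only [Finset.mem_Ico, Finset.mem_insert]
        omega
      push_cast
      rw [hsplit, Finset.sum_insert (by simp only [Finset.mem_Ico]; omega), ih]
      ring_nf
    
  have hb : b = a + ((b - a).toNat : ℤ) := by omega
  rw [hb]
  exact key _

end GPT

namespace GPT

variable {y : ℕ}

/-- number of labels in a different class than `i` -/
def wgt (k : ℤ) (B₀ : Fin y → ℤ) (i : Fin y) : ℕ :=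
  (Finset.univ.filter fun i' : Fin y => ¬(B₀ i % k = B₀ i' % k)).card

lemma chi_diag (k : ℤ) (B₀ : Fin y → ℤ) (i : Fin y) : chi k B₀ i i = 0 := if_pos rfl

/-- sum over all ordered pairs = sum over `Pairs` of both orientations,
provided the diagonal vanishes -/
lemma sum_pairs_sym (F : Fin y → Fin y → ZMod 2) (hd : ∀ i, F i i = 0) :
    ∑ p : Fin y × Fin y, F p.1 p.2 = ∑ p ∈ Pairs y, (F p.1 p.2 + F p.2 p.1) := by
  classical
  rw [← Finset.sum_filter_add_sum_filter_not Finset.univ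
    (fun p : Fin y × Fin y => p.1 < p.2) (fun p => F p.1 p.2)]
  rw [← Finset.sum_filter_add_sum_filter_not
    (Finset.univ.filter fun p : Fin y × Fin y => ¬ p.1 < p.2)
    (fun p : Fin y × Fin y => p.2 < p.1) (fun p => F p.1 p.2)]
  have h3 : ∑ p ∈ (Finset.univ.filter fun p : Fin y × Fin y => ¬ p.1 < p.2).filter
      (fun p : Fin y × Fin y => ¬ p.2 < p.1), F p.1 p.2 = 0 := by
    refine Finset.sum_eq_zero fun p hp => ?_
    simp only [Finset.mem_filter] at hp
    have : p.1 = p.2 := le_antisymm (not_lt.mp hp.2) (not_lt.mp hp.1.2)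
    rw [this]; exact hd p.2
  have h2 : ∑ p ∈ (Finset.univ.filter fun p : Fin y × Fin y => ¬ p.1 < p.2).filter
      (fun p : Fin y × Fin y => p.2 < p.1), F p.1 p.2 = ∑ p ∈ Pairs y, F p.2 p.1 := by
    refine Finset.sum_nbij' Prod.swap Prod.swap ?_ ?_ ?_ ?_ ?_
    · intro p hp
      simp only [Finset.mem_filter] at hp
      simp only [Pairs, Finset.mem_filter, Finset.mem_univ, true_and]
      exact hp.2
    · intro q hq
      simp only [Pairs, Finset.mem_filter, Finset.mem_univ, true_and] at hq
      simp only [Finset.mem_filter, Finset.mem_univ, true_and]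
      exact ⟨asymm hq, hq⟩
    · intro p _; exact Prod.swap_swap p
    · intro q _; exact Prod.swap_swap q
    · intro p _; rfl
  rw [h3, h2, add_zero, Finset.sum_add_distrib]
  rfl

lemma chi_eq_boole (k : ℤ) (B₀ : Fin y → ℤ) (i i' : Fin y) :
    chi k B₀ i i' = if ¬(B₀ i % k = B₀ i' % k) then 1 else 0 := by
  unfold chi; by_cases h : B₀ i % k = B₀ i' % k <;> simp [h]

lemma pairsum (k : ℤ) (B₀ : Fin y → ℤ) (g : Fin y → ZMod 2) :
    ∑ p ∈ Pairs y, chi k B₀ p.1 p.2 * (g p.1 + g p.2)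
      = ∑ i, g i * (wgt k B₀ i : ZMod 2) := by
  classical
  have h1 : ∑ p : Fin y × Fin y, chi k B₀ p.1 p.2 * g p.1
      = ∑ i, g i * (wgt k B₀ i : ZMod 2) := by
    rw [Fintype.sum_prod_type]
    refine Finset.sum_congr rfl fun i _ => ?_
    have : ∑ i' : Fin y, chi k B₀ i i' * g i = (∑ i' : Fin y, chi k B₀ i i') * g i := by
      rw [Finset.sum_mul]
    rw [this]
    have : ∑ i' : Fin y, chi k B₀ i i' = (wgt k B₀ i : ZMod 2) := by
      rw [Finset.sum_congr rfl fun i' _ => chi_eq_boole k B₀ i i']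
      exact Finset.sum_boole _ _
    rw [this, mul_comm]
  rw [← h1, sum_pairs_sym (fun i i' => chi k B₀ i i' * g i) (fun i => by
    show chi k B₀ i i * g i = 0
    rw [chi_diag]; ring)]
  refine Finset.sum_congr rfl fun p _ => ?_
  rw [chi_symm k B₀ p.2 p.1]; ring

/-- Winding lemma -/
lemma Phi_winding (N k : ℤ) (hN : 0 < N) (B₀ D : Fin y → ℤ) (t : Fin y → ℤ) :
    Phi N k B₀ (fun i => D i + N * t i)
      = Phi N k B₀ D + ∑ i, ((t i : ZMod 2)) * (wgt k B₀ i : ZMod 2) := by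
  unfold Phi
  rw [← pairsum k B₀ (fun i => ((t i : ZMod 2)))]
  rw [← Finset.sum_add_distrib]
  refine Finset.sum_congr rfl fun p _ => ?_
  have : D p.2 + N * t p.2 - (D p.1 + N * t p.1) = (D p.2 - D p.1) + N * (t p.2 - t p.1) := by
    ring
  rw [this, fl_add_mul _ _ _ hN]
  push_cast
  rw [zsub]
  ring

/-- if classes (mod `k`) differ then the difference is not divisible by `N` -/
lemma clsdiff_nmod (N k u v : ℤ) (hdvd : k ∣ N) (h : ¬ (u % k = v % k)) :
    (v - u) % N ≠ 0 := by
  intro h0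
  have hNd : N ∣ (v - u) := Int.dvd_of_emod_eq_zero h0
  have hkd : k ∣ (v - u) := dvd_trans hdvd hNd
  have hkd' : k ∣ (u - v) := by
    have := hkd.neg_right
    rwa [neg_sub] at this
  exact h (Int.emod_eq_emod_iff_emod_sub_eq_zero.mpr (Int.emod_eq_zero_of_dvd hkd'))

end GPT

namespace GPT

variable {y : ℕ}

/-- Moving one bead forward by `k` changes `Phi` by the number of beads crossed. -/
lemma Phi_move (N k : ℤ) (B₀ B : Fin y → ℤ) (hN : 0 < N) (hk0 : 0 < k) (hkN : k < N)
    (hdvd : k ∣ N)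
    (hcls : ∀ i, B i % k = B₀ i % k)
    (hinj : ∀ i i' : Fin y, B i % N = B i' % N → i = i')
    (a : Fin y)
    (hfree : ∀ i, B i % N ≠ (B a + k) % N) :
    Phi N k B₀ (Function.update B a (B a + k))
      = Phi N k B₀ B + ((Finset.univ.filter fun i : Fin y =>
          0 < (B i - B a) % N ∧ (B i - B a) % N < k).card : ZMod 2) := by
  classical
  set cr : Fin y → ZMod 2 :=
    fun x => if 0 < (B x - B a) % N ∧ (B x - B a) % N < k then 1 else 0 with hcr
  have crcls : ∀ x, B x % k = B a % k → cr x = 0 := by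
    intro x hx
    rw [hcr]; simp only
    rw [if_neg]
    rintro ⟨h1, h2⟩
    have hkd : k ∣ (B x - B a) := by
      have : (B x - B a) % k = 0 := by
        rw [Int.sub_emod, hx, sub_self, Int.zero_emod]
      exact Int.dvd_of_emod_eq_zero this
    have hdd : k ∣ (B x - B a) % N := dvd_emod N k _ hdvd hkd
    have := Int.le_of_dvd h1 hdd
    omega
  have hnz : ∀ x : Fin y, x ≠ a → (B x - B a) % N ≠ 0 := by
    intro x hx h0
    exact hx (hinj x a (Int.emod_eq_emod_iff_emod_sub_eq_zero.mpr h0))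
  set ind : Fin y × Fin y → ZMod 2 :=
    fun p => if p.1 = a then cr p.2 else if p.2 = a then cr p.1 else 0 with hind
  have key : ∀ p ∈ Pairs y,
      chi k B₀ p.1 p.2 * fl N (Function.update B a (B a + k) p.2
        - Function.update B a (B a + k) p.1)
      = chi k B₀ p.1 p.2 * fl N (B p.2 - B p.1) + ind p := by
    rintro ⟨i, j⟩ hp
    simp only [Pairs, Finset.mem_filter, Finset.mem_univ, true_and] at hp
    rw [hind]; simp only
    by_cases hi : i = a
    · have hj : j ≠ a := hi ▸ ne_of_gt hp
      rw [if_pos hi, hi, Function.update_self, Function.update_of_ne hj]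
      have hfl : fl N (B j - (B a + k)) = fl N (B j - B a)
          + (if (B j - B a) % N < k then 1 else 0) := by
        rw [show B j - (B a + k) = (B j - B a) - k by ring]
        exact fl_sub_k N k (B j - B a) hN hk0 hkN.le
      by_cases hc : B₀ a % k = B₀ j % k
      · rw [show chi k B₀ a j = 0 from if_pos hc,
          crcls j (by rw [hcls, hcls]; exact hc.symm), zero_mul, zero_mul, zero_add]
      · rw [show chi k B₀ a j = 1 from if_neg hc, one_mul, one_mul]
        rw [hfl]
        congr 1
        rw [hcr]; simp only
        have hne := hnz j hj
        by_cases h2 : (B j - B a) % N < k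
        · rw [if_pos h2, if_pos ⟨lt_of_le_of_ne (emod_nonneg' N _ hN) (Ne.symm hne), h2⟩]
        · rw [if_neg h2, if_neg (fun hh => h2 hh.2)]
    · rw [if_neg hi]
      by_cases hj : j = a
      · rw [if_pos hj, hj, Function.update_self, Function.update_of_ne hi]
        have hfl : fl N (B a + k - B i) = fl N (B a - B i)
            + (if N - k ≤ (B a - B i) % N then 1 else 0) := by
          rw [show B a + k - B i = (B a - B i) + k by ring]
          exact fl_add_k N k (B a - B i) hN hk0 hkN.le
        by_cases hc : B₀ i % k = B₀ a % k
        · rw [show chi k B₀ i a = 0 from if_pos hc,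
            crcls i (by rw [hcls, hcls]; exact hc), zero_mul, zero_mul, zero_add]
        · rw [show chi k B₀ i a = 1 from if_neg hc, one_mul, one_mul, hfl]
          congr 1
          rw [hcr]; simp only
          have hs := hnz i hi
          have hr : (B a - B i) % N ≠ 0 := by
            intro h0
            have hd1 : N ∣ (B a - B i) := Int.dvd_of_emod_eq_zero h0
            have hd2 : N ∣ (B i - B a) := by
              have := hd1.neg_right
              rwa [neg_sub] at this
            exact hs (Int.emod_eq_zero_of_dvd hd2)
          have hneg : (B i - B a) % N = N - (B a - B i) % N := by
            rw [show B i - B a = -(B a - B i) by ring]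
            exact neg_emod_nonzero N _ hN hr
          have hnk : (B i - B a) % N ≠ k := by
            intro hkk
            apply hfree i
            refine Int.emod_eq_emod_iff_emod_sub_eq_zero.mpr ?_
            rw [show B i - (B a + k) = (B i - B a) - k by ring, Int.sub_emod, hkk,
              Int.emod_eq_of_lt hk0.le hkN, sub_self, Int.zero_emod]
          have h0r := emod_nonneg' N (B a - B i) hN
          have h1r := emod_lt' N (B a - B i) hN
          rw [hneg] at hnk ⊢
          by_cases hcnd : N - k ≤ (B a - B i) % N
          · rw [if_pos hcnd, if_pos (by constructor <;> omega)]
          · rw [if_neg hcnd, if_neg (by rintro ⟨u1, u2⟩; omega)]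
      · rw [if_neg hj, Function.update_of_ne hi, Function.update_of_ne hj, add_zero]
  -- assemble the sum
  have cra : cr a = 0 := by
    rw [hcr]; simp
  have hstep : Phi N k B₀ (Function.update B a (B a + k))
      = Phi N k B₀ B + ∑ p ∈ Pairs y, ind p := by
    unfold Phi
    rw [← Finset.sum_add_distrib]
    exact Finset.sum_congr rfl key
  rw [hstep]
  congr 1
  have hsplit : ∑ p ∈ Pairs y, ind p
      = ∑ x ∈ Finset.univ.filter (fun x : Fin y => a < x), cr x
        + ∑ x ∈ Finset.univ.filter (fun x : Fin y => x < a), cr x := by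
    rw [← Finset.sum_filter_add_sum_filter_not (Pairs y) (fun p => p.1 = a) ind]
    congr 1
    · refine Finset.sum_nbij' (fun p => p.2) (fun x => (a, x)) ?_ ?_ ?_ ?_ ?_
      · rintro ⟨i, j⟩ hp
        simp only [Pairs, Finset.mem_filter, Finset.mem_univ, true_and] at hp ⊢
        obtain ⟨h1, h2⟩ := hp
        simpa using h2 ▸ h1
      · intro x hx
        simp only [Finset.mem_filter, Finset.mem_univ, true_and] at hx
        refine Finset.mem_filter.mpr ⟨?_, rfl⟩
        simp only [Pairs, Finset.mem_filter, Finset.mem_univ, true_and]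
        exact hx
      · rintro ⟨i, j⟩ hp
        simp only [Pairs, Finset.mem_filter, Finset.mem_univ, true_and] at hp
        simp [hp.2]
      · intro x _; rfl
      · rintro ⟨i, j⟩ hp
        simp only [Pairs, Finset.mem_filter, Finset.mem_univ, true_and] at hp
        rw [hind]; simp only
        rw [if_pos hp.2]
    · have hterm : ∀ p ∈ (Pairs y).filter (fun p => ¬ p.1 = a), ind p
          = (fun p : Fin y × Fin y => if p.2 = a then cr p.1 else 0) p := by
        rintro ⟨i, j⟩ hp
        simp only [Finset.mem_filter] at hp
        rw [hind]; simp only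
        rw [if_neg hp.2]
      rw [Finset.sum_congr rfl hterm, ← Finset.sum_filter]
      refine Finset.sum_nbij' (fun p => p.1) (fun x => (x, a)) ?_ ?_ ?_ ?_ ?_
      · rintro ⟨i, j⟩ hp
        simp only [Pairs, Finset.mem_filter, Finset.mem_univ, true_and] at hp ⊢
        obtain ⟨⟨h1, h2⟩, h3⟩ := hp
        simpa using h3 ▸ h1
      · intro x hx
        simp only [Finset.mem_filter, Finset.mem_univ, true_and] at hx
        refine Finset.mem_filter.mpr ⟨Finset.mem_filter.mpr ⟨?_, ?_⟩, rfl⟩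
        · simp only [Pairs, Finset.mem_filter, Finset.mem_univ, true_and]
          exact hx
        · simp only
          exact ne_of_lt hx
      · rintro ⟨i, j⟩ hp
        simp only [Pairs, Finset.mem_filter, Finset.mem_univ, true_and] at hp
        simp [hp.2]
      · intro x _; rfl
      · rintro ⟨i, j⟩ _; rfl
  rw [hsplit]
  have hunion : ∑ x ∈ Finset.univ.filter (fun x : Fin y => a < x), cr x
        + ∑ x ∈ Finset.univ.filter (fun x : Fin y => x < a), cr x
      = ∑ x ∈ Finset.univ.filter (fun x : Fin y => x ≠ a), cr x := by
    rw [← Finset.sum_filter_add_sum_filter_not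
      (Finset.univ.filter (fun x : Fin y => x ≠ a)) (fun x => a < x) cr]
    congr 1
    · congr 1
      ext x
      simp only [Finset.mem_filter, Finset.mem_univ, true_and]
      constructor
      · intro h; exact ⟨(ne_of_lt h).symm, h⟩
      · intro h; exact h.2
    · congr 1
      ext x
      simp only [Finset.mem_filter, Finset.mem_univ, true_and]
      constructor
      · intro h; exact ⟨ne_of_lt h, not_lt.mpr (le_of_lt h)⟩
      · intro h; exact lt_of_le_of_ne (not_lt.mp h.2) h.1
  rw [hunion, Finset.filter_ne', Finset.sum_erase _ cra]
  rw [hcr]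
  exact Finset.sum_boole _ _

end GPT

namespace GPT

variable {y : ℕ}

lemma chi_congr_right (k : ℤ) (B₀ : Fin y → ℤ) (a b x : Fin y) (hab : B₀ a % k = B₀ b % k) :
    chi k B₀ x b = chi k B₀ x a := by
  unfold chi; rw [hab]

lemma Phi_swap_aux (N k : ℤ) (hN : 0 < N) (hdvd : k ∣ N) (B₀ D : Fin y → ℤ)
    (hD : ∀ i, D i % k = B₀ i % k) (a b : Fin y) (hltab : a < b)
    (hab : B₀ a % k = B₀ b % k) :
    Phi N k B₀ (D ∘ (Equiv.swap a b)) = Phi N k B₀ D := by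
  classical
  set τ := Equiv.swap a b with hτ
  have hτa : τ a = b := Equiv.swap_apply_left a b
  have hτb : τ b = a := Equiv.swap_apply_right a b
  have hτo : ∀ z, z ≠ a → z ≠ b → τ z = z := fun z h1 h2 => Equiv.swap_apply_of_ne_of_ne h1 h2
  have clsτ : ∀ z, B₀ (τ z) % k = B₀ z % k := by
    intro z
    rcases eq_or_ne z a with rfl | hza
    · rw [hτa]; exact hab.symm
    rcases eq_or_ne z b with rfl | hzb
    · rw [hτb]; exact hab
    · rw [hτo z hza hzb]
  have τinv : ∀ z, τ (τ z) = z := fun z => Equiv.swap_apply_self a b z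
  have chiτ : ∀ i j, chi k B₀ (τ i) (τ j) = chi k B₀ i j := by
    intro i j; unfold chi; rw [clsτ, clsτ]
  set e : Fin y × Fin y → Fin y × Fin y :=
    fun p => if τ p.1 < τ p.2 then (τ p.1, τ p.2) else (τ p.2, τ p.1) with he
  have hmem : ∀ p ∈ Pairs y, e p ∈ Pairs y := by
    rintro ⟨i, j⟩ hp
    simp only [Pairs, Finset.mem_filter, Finset.mem_univ, true_and] at hp ⊢
    rw [he]; simp only
    by_cases h : τ i < τ j
    · rw [if_pos h]; exact h
    · rw [if_neg h]
      show τ j < τ i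
      exact lt_of_le_of_ne (not_lt.mp h) (fun hh => (ne_of_lt hp).symm (τ.injective hh))
  have hee : ∀ p ∈ Pairs y, e (e p) = p := by
    rintro ⟨i, j⟩ hp
    simp only [Pairs, Finset.mem_filter, Finset.mem_univ, true_and] at hp
    rw [he]; simp only
    by_cases h : τ i < τ j
    · rw [if_pos h]; simp only [τinv]
      rw [if_pos hp]
    · rw [if_neg h]; simp only [τinv]
      rw [if_neg (not_lt.mpr (le_of_lt hp))]
  have step1 : Phi N k B₀ (D ∘ τ) = Phi N k B₀ D
      + ∑ q ∈ Pairs y, chi k B₀ q.1 q.2 * (if τ q.2 < τ q.1 then 1 else 0) := by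
    unfold Phi
    rw [← Finset.sum_add_distrib]
    refine Finset.sum_nbij' e e hmem hmem hee hee ?_
    rintro ⟨i, j⟩ hp
    simp only [Pairs, Finset.mem_filter, Finset.mem_univ, true_and] at hp
    rw [he]; simp only [Function.comp_apply]
    by_cases h : τ i < τ j
    · rw [if_pos h]; simp only [τinv]
      rw [chiτ, if_neg (not_lt.mpr (le_of_lt hp))]
      ring
    · rw [if_neg h]; simp only [τinv]
      rw [if_pos hp]
      have hcsym : chi k B₀ (τ j) (τ i) = chi k B₀ i j := by
        rw [chiτ j i, chi_symm]
      rw [hcsym]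
      by_cases hc : B₀ i % k = B₀ j % k
      · rw [show chi k B₀ i j = 0 from if_pos hc]; ring
      · rw [show chi k B₀ i j = 1 from if_neg hc, one_mul, one_mul]
        have hnm : (D (τ i) - D (τ j)) % N ≠ 0 := by
          refine clsdiff_nmod N k (D (τ j)) (D (τ i)) hdvd ?_
          rw [hD, hD, clsτ, clsτ]
          exact fun hh => hc hh.symm
        rw [show D (τ j) - D (τ i) = -(D (τ i) - D (τ j)) by ring, fl_neg _ _ hN hnm]
        ring
  have zadd : ∀ a : ZMod 2, a + a = 0 := by decide
  have step2 : ∑ q ∈ Pairs y, chi k B₀ q.1 q.2 * (if τ q.2 < τ q.1 then 1 else 0)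
      = (0 : ZMod 2) := by
    set ι : Fin y × Fin y → Fin y × Fin y :=
      fun q => if q.1 = a ∧ q.2 < b then (q.2, b)
        else if q.2 = b ∧ a < q.1 then (a, q.1) else q with hι
    set f : Fin y × Fin y → ZMod 2 :=
      fun q => chi k B₀ q.1 q.2 * (if τ q.2 < τ q.1 then 1 else 0) with hf
    show ∑ q ∈ Pairs y, f q = 0
    have hmemP : ∀ q : Fin y × Fin y, q ∈ Pairs y ↔ q.1 < q.2 := by
      intro q; simp [Pairs]
    -- value of f in the three cases
    have hfc1 : ∀ i j : Fin y, i < j → i = a → j < b → f (i, j) = chi k B₀ a j := by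
      intro i j hij hia hjb
      have hja : j ≠ a := fun hh => by rw [hia, hh] at hij; exact lt_irrefl a hij
      have hjb' : j ≠ b := ne_of_lt hjb
      rw [hf]; simp only
      rw [hia, hτa, hτo j hja hjb', if_pos hjb, mul_one]
    have hfc2 : ∀ i j : Fin y, i < j → j = b → a < i → f (i, j) = chi k B₀ i b := by
      intro i j hij hjb hai
      have hia : i ≠ a := (ne_of_lt hai).symm
      have hib : i ≠ b := fun hh => by rw [hjb, hh] at hij; exact lt_irrefl b hij
      rw [hf]; simp only
      rw [hjb, hτb, hτo i hia hib, if_pos hai, mul_one]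
    have hfc3 : ∀ i j : Fin y, i < j → ¬(i = a ∧ j < b) → ¬(j = b ∧ a < i) →
        f (i, j) = 0 := by
      intro i j hij hnc1 hnc2
      rw [hf]; simp only
      rcases eq_or_ne i a with hia | hia
      · rcases eq_or_ne j b with hjb | hjb
        · rw [show chi k B₀ i j = 0 from if_pos (by rw [hia, hjb]; exact hab), zero_mul]
        · have hja : j ≠ a := fun hh => by rw [hia, hh] at hij; exact lt_irrefl a hij
          have hnlt : ¬ j < b := fun hh => hnc1 ⟨hia, hh⟩
          rw [hia, hτa, hτo j hja hjb, if_neg hnlt]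
          ring
      · rcases eq_or_ne i b with hib | hib
        · have hbj : b < j := by rw [hib] at hij; exact hij
          have hja : j ≠ a := fun hh => by
            rw [hh] at hbj; exact absurd (hbj.trans hltab) (lt_irrefl b)
          have hjb : j ≠ b := (ne_of_lt hbj).symm
          rw [hib, hτb, hτo j hja hjb,
            if_neg (fun hh => absurd (hbj.trans (hh.trans hltab)) (lt_irrefl b))]
          ring
        · rcases eq_or_ne j a with hja | hja
          · have hia' : i < a := by rw [hja] at hij; exact hij
            rw [hja, hτa, hτo i hia hib,
              if_neg (fun hh => absurd (hh.trans (hia'.trans hltab)) (lt_irrefl b))]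
            ring
          · rcases eq_or_ne j b with hjb | hjb
            · have hnlt : ¬ a < i := fun hh => hnc2 ⟨hjb, hh⟩
              rw [hjb, hτb, hτo i hia hib, if_neg hnlt]; ring
            · rw [hτo i hia hib, hτo j hja hjb, if_neg (not_lt.mpr (le_of_lt hij))]; ring
    refine Finset.sum_involution (fun q _ => ι q) ?_ ?_ ?_ ?_
    · rintro ⟨i, j⟩ hq
      have hij : i < j := (hmemP (i, j)).mp hq
      rw [hι]; simp only
      by_cases hc1 : i = a ∧ j < b
      · rw [if_pos hc1]
        have h1 : f (i, j) = chi k B₀ a j := hfc1 i j hij hc1.1 hc1.2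
        have haj : a < j := hc1.1 ▸ hij
        have h2 : f (j, b) = chi k B₀ j b := hfc2 j b hc1.2 rfl haj
        rw [h1, h2, chi_congr_right k B₀ a b j hab, chi_symm k B₀ j a]
        exact zadd _
      · rw [if_neg hc1]
        by_cases hc2 : j = b ∧ a < i
        · rw [if_pos hc2]
          have h1 : f (i, j) = chi k B₀ i b := hfc2 i j hij hc2.1 hc2.2
          have h2 : f (a, i) = chi k B₀ a i := hfc1 a i hc2.2 rfl (hc2.1 ▸ hij)
          rw [h1, h2, chi_congr_right k B₀ a b i hab, chi_symm k B₀ a i]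
          exact zadd _
        · rw [if_neg hc2]
          exact zadd _
    · rintro ⟨i, j⟩ hq hfne
      have hij : i < j := (hmemP (i, j)).mp hq
      rw [hι]; simp only
      by_cases hc1 : i = a ∧ j < b
      · rw [if_pos hc1]
        intro hh
        have : j = i := congrArg Prod.fst hh
        exact absurd (this ▸ hij) (lt_irrefl _)
      · rw [if_neg hc1]
        by_cases hc2 : j = b ∧ a < i
        · rw [if_pos hc2]
          intro hh
          have : a = i := congrArg Prod.fst hh
          exact absurd (this ▸ hc2.2) (lt_irrefl _)
        · exact absurd (hfc3 i j hij hc1 hc2) hfne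
    · rintro ⟨i, j⟩ hq
      have hij : i < j := (hmemP (i, j)).mp hq
      rw [hι]; simp only
      by_cases hc1 : i = a ∧ j < b
      · rw [if_pos hc1, hmemP]
        exact hc1.2
      · rw [if_neg hc1]
        by_cases hc2 : j = b ∧ a < i
        · rw [if_pos hc2, hmemP]
          exact hc2.2
        · rw [if_neg hc2, hmemP]
          exact hij
    · rintro ⟨i, j⟩ hq
      have hij : i < j := (hmemP (i, j)).mp hq
      show ι (ι (i, j)) = (i, j)
      rw [hι]; simp only
      by_cases hc1 : i = a ∧ j < b
      · rw [if_pos hc1]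
        show (if j = a ∧ b < b then ((b : Fin y), b)
          else if b = b ∧ a < j then (a, j) else (j, b)) = (i, j)
        have haj : a < j := by rw [← hc1.1]; exact hij
        rw [if_neg (fun hh => absurd hh.2 (lt_irrefl b)), if_pos ⟨rfl, haj⟩, Prod.ext_iff]
        exact ⟨hc1.1.symm, rfl⟩
      · rw [if_neg hc1]
        by_cases hc2 : j = b ∧ a < i
        · rw [if_pos hc2]
          show (if a = a ∧ i < b then (i, b)
            else if i = b ∧ a < a then ((a : Fin y), a) else (a, i)) = (i, j)
          have hib : i < b := by rw [← hc2.1]; exact hij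
          rw [if_pos ⟨rfl, hib⟩, Prod.ext_iff]
          exact ⟨rfl, hc2.1.symm⟩
        · rw [if_neg hc2]
          show (if i = a ∧ j < b then (j, b)
            else if j = b ∧ a < i then (a, i) else (i, j)) = (i, j)
          rw [if_neg hc1, if_neg hc2]
  rw [step1, step2, add_zero]

lemma Phi_swap (N k : ℤ) (hN : 0 < N) (hdvd : k ∣ N) (B₀ D : Fin y → ℤ)
    (hD : ∀ i, D i % k = B₀ i % k) (a b : Fin y)
    (hab : B₀ a % k = B₀ b % k) :
    Phi N k B₀ (D ∘ (Equiv.swap a b)) = Phi N k B₀ D := by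
  rcases lt_trichotomy a b with h | h | h
  · exact Phi_swap_aux N k hN hdvd B₀ D hD a b h hab
  · rw [h, Equiv.swap_self]
    rfl
  · rw [Equiv.swap_comm]
    exact Phi_swap_aux N k hN hdvd B₀ D hD b a h hab.symm

end GPT

namespace GPT

variable {y : ℕ}

lemma Phi_perm_aux (N k : ℤ) (hN : 0 < N) (hdvd : k ∣ N) (B₀ : Fin y → ℤ) :
    ∀ n (σ : Equiv.Perm (Fin y)), σ.support.card ≤ n →
      (∀ i, B₀ (σ i) % k = B₀ i % k) →
      ∀ D : Fin y → ℤ, (∀ i, D i % k = B₀ i % k) →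
      Phi N k B₀ (D ∘ σ) = Phi N k B₀ D := by
  intro n
  induction n with
  | zero =>
    intro σ hcard _ D _
    have hone : σ = 1 := Equiv.Perm.card_support_eq_zero.mp (Nat.le_zero.mp hcard)
    rw [hone]
    rfl
  | succ n ih =>
    intro σ hcard hσcls D hD
    by_cases h1 : σ = 1
    · rw [h1]; rfl
    · obtain ⟨x, hx⟩ : ∃ x, σ x ≠ x := by
        by_contra hno
        push_neg at hno
        exact h1 (Equiv.ext hno)
      set τ := Equiv.swap x (σ x) with hτ
      have hcls_sx : B₀ (σ x) % k = B₀ x % k := hσcls x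
      have hτcls : ∀ z, B₀ (τ z) % k = B₀ z % k := by
        intro z
        rcases eq_or_ne z x with rfl | hzx
        · rw [hτ, Equiv.swap_apply_left]; exact hcls_sx
        rcases eq_or_ne z (σ x) with rfl | hzs
        · rw [hτ, Equiv.swap_apply_right]; exact hcls_sx.symm
        · rw [hτ, Equiv.swap_apply_of_ne_of_ne hzx hzs]
      have hcard' : (τ * σ).support.card ≤ n := by
        have := Equiv.Perm.card_support_swap_mul hx
        rw [← hτ] at this
        omega
      have hcls' : ∀ i, B₀ ((τ * σ) i) % k = B₀ i % k := by
        intro i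
        show B₀ (τ (σ i)) % k = B₀ i % k
        rw [hτcls (σ i), hσcls i]
      have hDτ : ∀ i, (D ∘ τ) i % k = B₀ i % k := by
        intro i
        show D (τ i) % k = B₀ i % k
        rw [hD (τ i), hτcls i]
      have hcomp : D ∘ ⇑σ = (D ∘ ⇑τ) ∘ ⇑(τ * σ) := by
        funext i
        show D (σ i) = D (τ (τ (σ i)))
        rw [hτ, Equiv.swap_apply_self]
      rw [hcomp, ih (τ * σ) hcard' hcls' (D ∘ ⇑τ) hDτ,
        Phi_swap N k hN hdvd B₀ D hD x (σ x) hcls_sx.symm]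

lemma Phi_compare (N k : ℤ) (hN : 0 < N) (hdvd : k ∣ N) (B₀ B C : Fin y → ℤ)
    (hBc : ∀ i, B i % k = B₀ i % k) (hCc : ∀ i, C i % k = B₀ i % k)
    (hBinj : ∀ i i', B i % N = B i' % N → i = i')
    (hCinj : ∀ i i', C i % N = C i' % N → i = i')
    (himg : Finset.univ.image (fun i => B i % N) = Finset.univ.image (fun i => C i % N))
    (hgood : ∀ i, ((wgt k B₀ i : ZMod 2) = 0) ∨ (B i = B₀ i ∧ C i = B₀ i)) :
    Phi N k B₀ C = Phi N k B₀ B := by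
  classical
  have hex : ∀ i, ∃ i', B i' % N = C i % N := by
    intro i
    have hmem : C i % N ∈ Finset.univ.image (fun i => C i % N) :=
      Finset.mem_image_of_mem _ (Finset.mem_univ i)
    rw [← himg] at hmem
    obtain ⟨i', _, hi'⟩ := Finset.mem_image.mp hmem
    exact ⟨i', hi'⟩
  set σf : Fin y → Fin y := fun i => (hex i).choose with hσf
  have hσspec : ∀ i, B (σf i) % N = C i % N := fun i => (hex i).choose_spec
  have hσinj : Function.Injective σf := by
    intro i1 i2 h
    apply hCinj
    rw [← hσspec i1, ← hσspec i2, h]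
  have hσcls : ∀ i, B₀ (σf i) % k = B₀ i % k := by
    intro i
    rw [← hBc (σf i), ← hCc i]
    calc B (σf i) % k = (B (σf i) % N) % k := (Int.emod_emod_of_dvd _ hdvd).symm
      _ = (C i % N) % k := by rw [hσspec i]
      _ = C i % k := Int.emod_emod_of_dvd _ hdvd
  have hNdvd : ∀ i, N ∣ (C i - B (σf i)) := by
    intro i
    exact Int.dvd_of_emod_eq_zero (Int.emod_eq_emod_iff_emod_sub_eq_zero.mp (hσspec i).symm)
  set t : Fin y → ℤ := fun i => (C i - B (σf i)) / N with ht
  have hCt : C = fun i => (B ∘ σf) i + N * t i := by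
    funext i
    show C i = B (σf i) + N * ((C i - B (σf i)) / N)
    rw [Int.mul_ediv_cancel' (hNdvd i)]
    ring
  have htz : ∀ i, ((t i : ZMod 2)) * (wgt k B₀ i : ZMod 2) = 0 := by
    intro i
    rcases hgood i with h | ⟨hB, hC⟩
    · rw [h, mul_zero]
    · have hfix : σf i = i := by
        apply hBinj
        rw [hσspec i, hB, hC]
      rw [ht]; simp only
      rw [hfix, hC, hB, sub_self, Int.zero_ediv, Int.cast_zero, zero_mul]
  have hbij : Function.Bijective σf := Finite.injective_iff_bijective.mp hσinj
  set σ : Equiv.Perm (Fin y) := Equiv.ofBijective σf hbij with hσ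
  rw [hCt, Phi_winding N k hN B₀ (B ∘ σf) t,
    Finset.sum_eq_zero (fun i _ => htz i), add_zero]
  show Phi N k B₀ (B ∘ ⇑σ) = Phi N k B₀ B
  exact Phi_perm_aux N k hN hdvd B₀ σ.support.card σ le_rfl (fun i => hσcls i) B hBc

end GPT

namespace GPT

/-- periodicity extended to all multiples -/
lemma per_mul (x y : ℕ) (f : ℤ → ℤ) (hfp : ∀ i, f (i + (y:ℤ)) = f i + x) :
    ∀ (i t : ℤ), f (i + t * y) = f i + t * x := by
  intro i t
  induction t using Int.induction_on with
  | zero => simp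
  | succ n ih =>
    have := hfp (i + n * y)
    push_cast
    push_cast at ih this
    rw [show i + (n + 1) * y = i + n * y + y by ring, this, ih]
    ring
  | pred n ih =>
    have := hfp (i + (-n - 1) * y)
    push_cast
    push_cast at ih this
    rw [show i + (-n - 1) * y + y = i + -n * y by ring] at this
    linear_combination ih - this

lemma dvd_small_zero (N d : ℤ) (hN : 0 < N) (h : N ∣ d) (h1 : -N < d) (h2 : d < N) :
    d = 0 := by
  rcases le_or_gt 0 d with hd | hd
  · have he : d % N = d := Int.emod_eq_of_lt hd h2
    rw [Int.emod_eq_zero_of_dvd h] at he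
    omega
  · have hnd : N ∣ -d := h.neg_right
    have he : (-d) % N = -d := Int.emod_eq_of_lt (by omega) (by omega)
    rw [Int.emod_eq_zero_of_dvd hnd] at he
    omega

lemma emod_sub_left (N a b : ℤ) : ((a % N) - b) % N = (a - b) % N := by
  conv_rhs => rw [Int.sub_emod]
  rw [Int.sub_emod (a % N) b, Int.emod_emod_of_dvd _ dvd_rfl]

lemma sum_Ico_split (g : ℤ → ℤ) (a b c : ℤ) (hab : a ≤ b) (hbc : b ≤ c) :
    ∑ i ∈ Finset.Ico a c, g i = ∑ i ∈ Finset.Ico a b, g i + ∑ i ∈ Finset.Ico b c, g i := by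
  rw [← Finset.Ico_union_Ico_eq_Ico hab hbc,
    Finset.sum_union (Finset.Ico_disjoint_Ico_consecutive a b c)]

end GPT

namespace GPT

lemma ribbon_analysis (x y k : ℕ) (hy : 0 < y) (hk : 0 < k) (N : ℤ) (hN : N = (x:ℤ) + y)
    (ν ρ : ℤ → ℤ)
    (hνm : ∀ i, ν i ≤ ν (i+1)) (hνp : ∀ i, ν (i + (y:ℤ)) = ν i + x)
    (hρm : ∀ i, ρ i ≤ ρ (i+1)) (hρp : ∀ i, ρ (i + (y:ℤ)) = ρ i + x)
    (hrib : IsKRibbon x y k ν ρ) :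
    ((k:ℤ) = N ∧ ribbonHeight y ν ρ = y) ∨
    ((k:ℤ) < N ∧ ∃ p : ℤ,
      (p % N ∈ resSet N y ν) ∧
      (∀ q ∈ resSet N y ν, (q - (p + (k:ℤ))) % N ≠ 0) ∧
      (resSet N y ρ = insert ((p + (k:ℤ)) % N) ((resSet N y ν).erase (p % N))) ∧
      (ribbonHeight y ν ρ = ((resSet N y ν).filter
          (fun q => 0 < (q - p) % N ∧ (q - p) % N < (k:ℤ))).card)) := by
  classical
  obtain ⟨hle, hsum, h2, hovl, hconn⟩ := hrib
  simp only [RowOcc] at hovl hconn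
  have hN0 : (0:ℤ) < N := by omega
  by_cases hall : ∀ i, ν (i + 1) = ρ i - 1
  · left
    constructor
    · -- k = N via telescoping
      have hint : ∀ i ∈ Finset.Ico (0:ℤ) (y:ℤ), ρ i - ν i = ((ν (i+1) + (i+1)) - (ν i + i)) := by
        intro i _
        have := hall i
        omega
      rw [Finset.sum_congr rfl hint, telescope_Ico (fun i => ν i + i) 0 y (by positivity)] at hsum
      have := hνp 0
      simp only [zero_add] at this
      rw [this] at hsum
      omega
    · rw [ribbonHeight, if_pos hall]
  · right
    -- there is an unoccupied row
    have hunocc_ex : ∃ u, ¬ (ν u < ρ u) := by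
      by_contra hno
      push_neg at hno
      exact hall (fun i => by have := hovl i (hno i) (hno (i+1)); have := h2 i; omega)
    obtain ⟨u, hu⟩ := hunocc_ex
    -- there is an occupied row
    have hocc_ex : ∃ o, ν o < ρ o := by
      by_contra hno
      push_neg at hno
      rw [Finset.sum_eq_zero (fun i _ => by have := hle i; have := hno i; omega)] at hsum
      omega
    obtain ⟨o, ho⟩ := hocc_ex
    -- periodicity of occupancy
    have occm : ∀ (i t : ℤ), (ν (i + t * y) < ρ (i + t * y)) ↔ (ν i < ρ i) := by
      intro i t
      rw [per_mul x y ν hνp i t, per_mul x y ρ hρp i t]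
      omega
    have occ1 : ∀ (i : ℤ), (ν (i + y) < ρ (i + y)) ↔ (ν i < ρ i) := by
      intro i
      have := occm i 1
      rw [one_mul] at this
      exact this
    -- find an occupied row in the window (u, u+y]
    have hT : ∃ o' ∈ Finset.Ioc u (u + (y:ℤ)), ν o' < ρ o' := by
      have hW : ∀ a : ℤ, (∃ o' ∈ Finset.Ioc a (a + (y:ℤ)), ν o' < ρ o')
          = (∃ o' ∈ Finset.Ioc (a+1) ((a+1) + (y:ℤ)), ν o' < ρ o') := by
        intro a
        apply propext
        constructor
        · rintro ⟨o', hmem, hocc⟩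
          simp only [Finset.mem_Ioc] at hmem
          rcases eq_or_ne o' (a + 1) with rfl | hne
          · exact ⟨a + 1 + y, by simp only [Finset.mem_Ioc]; omega, (occ1 (a+1)).mpr hocc⟩
          · exact ⟨o', by simp only [Finset.mem_Ioc]; omega, hocc⟩
        · rintro ⟨o', hmem, hocc⟩
          simp only [Finset.mem_Ioc] at hmem
          rcases eq_or_ne o' (a + 1 + y) with rfl | hne
          · refine ⟨a + 1, by simp only [Finset.mem_Ioc]; omega, (occ1 (a+1)).mp ?_⟩
            have : a + 1 + (y:ℤ) = a + 1 + y := by ring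
            rwa [this]
          · exact ⟨o', by simp only [Finset.mem_Ioc]; omega, hocc⟩
      have := const_of_step _ hW (o - 1) u
      rw [← this]
      exact ⟨o, by simp only [Finset.mem_Ioc]; omega, ho⟩
    set T := (Finset.Ioc u (u + (y:ℤ))).filter (fun i => ν i < ρ i) with hTdef
    have hTne : T.Nonempty := by
      obtain ⟨o', h1, h2⟩ := hT
      exact ⟨o', Finset.mem_filter.mpr ⟨h1, h2⟩⟩
    set i0 := T.min' hTne with hi0
    have hi0T : i0 ∈ T := T.min'_mem hTne
    have hi0occ : ν i0 < ρ i0 := (Finset.mem_filter.mp hi0T).2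
    have hi0win : u < i0 ∧ i0 ≤ u + y := by
      have := (Finset.mem_filter.mp hi0T).1
      simpa [Finset.mem_Ioc] using this
    have hn1 : ¬ (ν (i0 - 1) < ρ (i0 - 1)) := by
      intro hocc
      rcases eq_or_lt_of_le (show u ≤ i0 - 1 by omega) with heq | hlt
      · rw [heq] at hu
        exact hu hocc
      · have hmem : i0 - 1 ∈ T := Finset.mem_filter.mpr ⟨by simp only [Finset.mem_Ioc]; omega, hocc⟩
        have := T.min'_le _ hmem
        omega
    -- occupied rows in [i0, i0+y) form an initial segment
    have hFill : ∀ j, i0 ≤ j → j < i0 + y → (ν j < ρ j) →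
        ∀ m, i0 ≤ m → m ≤ j → (ν m < ρ m) := by
      intro j hj1 hj2 hjocc m hm1 hm2
      rcases hconn i0 j (by omega) (by omega) hi0occ hjocc m hm1 hm2 with h | h
      · exact h
      · exfalso
        have := h (i0 - 1 + y) (by omega) (by omega)
        rw [show i0 - 1 + (y:ℤ) = (i0 - 1) + (1:ℤ) * y by ring, occm] at this
        exact hn1 this
    set T' := (Finset.Ico i0 (i0 + (y:ℤ))).filter (fun i => ν i < ρ i) with hT'def
    have hT'ne : T'.Nonempty :=
      ⟨i0, Finset.mem_filter.mpr ⟨by simp only [Finset.mem_Ico]; omega, hi0occ⟩⟩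
    set jm := T'.max' hT'ne with hjs
    have hjsT : jm ∈ T' := T'.max'_mem hT'ne
    have hjsocc : ν jm < ρ jm := (Finset.mem_filter.mp hjsT).2
    have hjswin : i0 ≤ jm ∧ jm < i0 + y := by
      have := (Finset.mem_filter.mp hjsT).1
      simpa [Finset.mem_Ico] using this
    have hocc_all : ∀ m, i0 ≤ m → m ≤ jm → ν m < ρ m :=
      hFill jm hjswin.1 hjswin.2 hjsocc
    have hunocc2 : ∀ m, jm < m → m < i0 + y → ¬ (ν m < ρ m) := by
      intro m hm1 hm2 hocc
      have hmem : m ∈ T' := Finset.mem_filter.mpr ⟨by simp only [Finset.mem_Ico]; omega, hocc⟩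
      have := T'.le_max' _ hmem
      omega
    have hlasty : ¬ (ν (i0 + y - 1) < ρ (i0 + y - 1)) := by
      rw [show i0 + (y:ℤ) - 1 = (i0 - 1) + (1:ℤ) * y by ring, occm]
      exact hn1
    have hjlt : jm + 1 < i0 + y := by
      have : jm ≠ i0 + y - 1 := fun hh => hlasty (hh ▸ hjsocc)
      omega
    have hcons : ∀ i, i0 ≤ i → i < jm → ν (i+1) = ρ i - 1 := by
      intro i h1 h2'
      have ha := hovl i (hocc_all i h1 (by omega)) (hocc_all (i+1) (by omega) (by omega))
      have hb := h2 i
      omega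
    -- the amount k in terms of the interval
    have hkey : (k:ℤ) = (jm + ρ jm) - (i0 + ν i0) := by
      have hper : ∀ i : ℤ, ρ (i + (y:ℤ)) - ν (i + (y:ℤ)) = ρ i - ν i := by
        intro i; rw [hνp, hρp]; ring
      have hw : ∑ i ∈ Finset.Ico i0 (i0 + (y:ℤ)), (ρ i - ν i) = (k:ℤ) := by
        rw [per_sum (fun i => ρ i - ν i) y hy hper i0 0]
        rw [show (0:ℤ) + (y:ℤ) = (y:ℤ) by ring]
        exact hsum
      rw [sum_Ico_split _ i0 (jm + 1) (i0 + y) (by omega) (by omega)] at hw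
      have hz : ∑ i ∈ Finset.Ico (jm + 1) (i0 + (y:ℤ)), (ρ i - ν i) = 0 := by
        refine Finset.sum_eq_zero fun i hi => ?_
        simp only [Finset.mem_Ico] at hi
        have := hunocc2 i (by omega) (by omega)
        have := hle i
        omega
      rw [hz, add_zero] at hw
      have hint : ∀ i ∈ Finset.Ico i0 (jm + 1), ρ i - ν i
          = ((ν (i+1) + (i+1)) - (ν i + i)) + (ρ i - ν (i+1) - 1) := by
        intro i _; ring
      rw [Finset.sum_congr rfl hint, Finset.sum_add_distrib,
        telescope_Ico (fun i => ν i + i) i0 (jm + 1) (by omega)] at hw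
      have hsingles : ∑ i ∈ Finset.Ico i0 (jm + 1), (ρ i - ν (i+1) - 1)
          = ρ jm - ν (jm + 1) - 1 := by
        rw [sum_Ico_split _ i0 jm (jm + 1) (by omega) (by omega)]
        rw [Finset.sum_eq_zero (fun i hi => by
          simp only [Finset.mem_Ico] at hi
          have := hcons i hi.1 hi.2
          omega)]
        rw [zero_add, show Finset.Ico jm (jm + 1) = {jm} by
          ext i; simp only [Finset.mem_Ico, Finset.mem_singleton]; omega,
          Finset.sum_singleton]
      rw [hsingles] at hw
      omega
    set p := i0 + ν i0 with hp
    have hpk : p + k = jm + ρ jm := by omega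
    -- k < N
    have hkN : (k:ℤ) < N := by
      have ha := h2 jm
      have hb := mono_le ν hνm (jm + 1) (i0 + y) (by omega)
      have hc := hνp i0
      omega
    -- position bounds
    have hPub : ∀ i, i0 ≤ i → i ≤ jm → p ≤ i + ν i ∧ i + ν i < p + k := by
      intro i hi1 hi2
      have h1 := mono_le ν hνm i0 i hi1
      have h2' := mono_le ν hνm i jm hi2
      omega
    have hνjm1 : ρ jm ≤ ν (jm + 1) := by
      by_contra hcon
      have ha := h2 jm
      have hun := hunocc2 (jm + 1) (by omega) hjlt
      have hb := hle (jm + 1)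
      have hc := hρm jm
      omega
    have hPlb : ∀ i, jm < i → i < i0 + y → p + k < i + ν i ∧ i + ν i < p + N := by
      intro i hi1 hi2
      have h1 := mono_le ν hνm (jm + 1) i (by omega)
      have h3 := pos_strict ν hνm i (i0 + y) (by omega)
      have h4 := hνp i0
      omega
    have hwin : Finset.Ico i0 (i0 + (y:ℤ)) = insert i0 (Finset.Ico (i0+1) (i0+(y:ℤ))) :=
      Ico_insert_left i0 y hy
    have hi0mem : i0 ∈ Finset.Ico i0 (i0 + (y:ℤ)) := by
      simp only [Finset.mem_Ico]; omega
    have herase : (resSet N y ν).erase (p % N)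
        = (Finset.Ico (i0+1) (i0+(y:ℤ))).image (fun i => (i + ν i) % N) := by
      rw [resSet_window x y hy N hN ν hνp i0, hwin, Finset.image_insert]
      refine Finset.erase_insert ?_
      intro hmem
      obtain ⟨i, hi, heq⟩ := Finset.mem_image.mp hmem
      simp only [Finset.mem_Ico] at hi
      have := pos_inj x y N hN ν hνm hνp i0 i i0
        (by simp only [Finset.mem_Ico]; omega) hi0mem heq
      omega
    refine ⟨hkN, p, ?_, ?_, ?_, ?_⟩
    · rw [resSet_window x y hy N hN ν hνp i0]
      exact Finset.mem_image.mpr ⟨i0, hi0mem, rfl⟩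
    · intro q hq
      rw [resSet_window x y hy N hN ν hνp i0] at hq
      obtain ⟨i, hi, rfl⟩ := Finset.mem_image.mp hq
      simp only [Finset.mem_Ico] at hi
      rw [emod_sub_left N (i + ν i) (p + k)]
      intro h0
      have hdvd := Int.dvd_of_emod_eq_zero h0
      rcases le_or_gt i jm with hle' | hlt'
      · have := hPub i hi.1 hle'
        have := dvd_small_zero N _ hN0 hdvd (by omega) (by omega)
        omega
      · have := hPlb i hlt' hi.2
        have := dvd_small_zero N _ hN0 hdvd (by omega) (by omega)
        omega
    · rw [herase, resSet_window x y hy N hN ρ hρp i0]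
      ext q
      simp only [Finset.mem_image, Finset.mem_insert, Finset.mem_Ico]
      constructor
      · rintro ⟨i, hi, rfl⟩
        rcases lt_or_ge i jm with hlt' | hge'
        · right
          refine ⟨i + 1, by omega, ?_⟩
          have := hcons i hi.1 hlt'
          exact congrArg (fun z : ℤ => z % N) (by omega)
        · rcases eq_or_lt_of_le hge' with heq | hlt'
          · left
            rw [← heq]
            exact congrArg (fun z : ℤ => z % N) (by omega)
          · right
            refine ⟨i, by omega, ?_⟩
            have h1 := hunocc2 i hlt' hi.2
            have h2' := hle i
            exact congrArg (fun z : ℤ => z % N) (by omega)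
      · rintro (rfl | ⟨i, hi, rfl⟩)
        · refine ⟨jm, by omega, ?_⟩
          exact congrArg (fun z : ℤ => z % N) (by omega)
        · rcases le_or_gt i jm with hle' | hlt'
          · refine ⟨i - 1, by omega, ?_⟩
            have := hcons (i - 1) (by omega) (by omega)
            rw [show i - 1 + 1 = i by ring] at this
            exact congrArg (fun z : ℤ => z % N) (by omega)
          · refine ⟨i, by omega, ?_⟩
            have h1 := hunocc2 i hlt' hi.2
            have h2' := hle i
            exact congrArg (fun z : ℤ => z % N) (by omega)
    · rw [ribbonHeight, if_neg hall]
      have hcnt1 : ((Finset.Ico (0:ℤ) (y:ℤ)).filter (fun i => ν i < ρ i)).card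
          = ((Finset.Ico i0 (i0+(y:ℤ))).filter (fun i => ν i < ρ i)).card := by
        rw [Finset.card_filter, Finset.card_filter]
        have hg : ∀ i : ℤ, (if ν (i + (y:ℤ)) < ρ (i + (y:ℤ)) then (1:ℕ) else 0)
            = (if ν i < ρ i then 1 else 0) := by
          intro i
          exact if_congr (occ1 i) rfl rfl
        have := per_sum (fun i => if ν i < ρ i then (1:ℕ) else 0) y hy hg 0 i0
        simpa using this
      have hcnt2 : (Finset.Ico i0 (i0+(y:ℤ))).filter (fun i => ν i < ρ i)
          = Finset.Ico i0 (jm + 1) := by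
        ext i
        simp only [Finset.mem_filter, Finset.mem_Ico]
        constructor
        · rintro ⟨⟨ha, hb⟩, hocc⟩
          refine ⟨ha, ?_⟩
          by_contra hcon
          exact hunocc2 i (by omega) hb hocc
        · rintro ⟨ha, hb⟩
          exact ⟨⟨ha, by omega⟩, hocc_all i ha (by omega)⟩
      have hrhs : ((resSet N y ν).filter
          (fun q => 0 < (q - p) % N ∧ (q - p) % N < (k:ℤ))).card
          = ((jm - i0)).toNat := by
        rw [resSet_window x y hy N hN ν hνp i0, Finset.filter_image]
        rw [Finset.card_image_of_injOn (fun i hi j hj hij =>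
          pos_inj x y N hN ν hνm hνp i0 i j (Finset.mem_of_mem_filter _ hi)
            (Finset.mem_of_mem_filter _ hj) hij)]
        have hfeq : (Finset.Ico i0 (i0+(y:ℤ))).filter
            (fun i => 0 < ((i + ν i) % N - p) % N ∧ ((i + ν i) % N - p) % N < (k:ℤ))
            = Finset.Ico (i0 + 1) (jm + 1) := by
          ext i
          simp only [Finset.mem_filter, Finset.mem_Ico]
          rw [emod_sub_left N (i + ν i) p]
          constructor
          · rintro ⟨⟨ha, hb⟩, hpred⟩
            refine ⟨?_, ?_⟩
            · rcases eq_or_lt_of_le ha with heq | hlt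
              · exfalso
                rw [← heq] at hpred
                rw [show i0 + ν i0 - p = 0 by omega, Int.zero_emod] at hpred
                omega
              · omega
            · by_contra hcon
              have hbd := hPlb i (by omega) hb
              rw [Int.emod_eq_of_lt (by omega) (by omega)] at hpred
              omega
          · rintro ⟨ha, hb⟩
            have hbd := hPub i (by omega) (by omega)
            have hst := pos_strict ν hνm i0 i (by omega)
            refine ⟨⟨by omega, by omega⟩, ?_⟩
            rw [Int.emod_eq_of_lt (by omega) (by omega)]
            omega
        rw [hfeq, Int.card_Ico]
        omega
      rw [hcnt1, hcnt2, hrhs, Int.card_Ico]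
      omega

end GPT

namespace GPT

lemma finimage (y : ℕ) (F : ℤ → ℤ) :
    Finset.univ.image (fun i : Fin y => F (i:ℤ)) = (Finset.Ico (0:ℤ) (y:ℤ)).image F := by
  ext q
  simp only [Finset.mem_image, Finset.mem_univ, true_and, Finset.mem_Ico]
  constructor
  · rintro ⟨i, rfl⟩
    exact ⟨(i:ℤ), ⟨by positivity, by exact_mod_cast i.isLt⟩, rfl⟩
  · rintro ⟨z, ⟨h0, hz⟩, rfl⟩
    refine ⟨⟨z.toNat, by omega⟩, ?_⟩
    congr 1
    push_cast
    omega

lemma image_update_mod (y : ℕ) (N : ℤ) (B : Fin y → ℤ)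
    (hinj : ∀ i i' : Fin y, B i % N = B i' % N → i = i') (a : Fin y) (v : ℤ) :
    Finset.univ.image (fun i => (Function.update B a v) i % N)
      = insert (v % N) ((Finset.univ.image fun i => B i % N).erase (B a % N)) := by
  classical
  ext q
  simp only [Finset.mem_image, Finset.mem_insert, Finset.mem_erase, Finset.mem_univ, true_and]
  constructor
  · rintro ⟨i, rfl⟩
    rcases eq_or_ne i a with rfl | hne
    · left; rw [Function.update_self]
    · right
      rw [Function.update_of_ne hne]
      exact ⟨fun hh => hne (hinj i a hh), ⟨i, rfl⟩⟩
  · rintro (rfl | ⟨hne, i, rfl⟩)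
    · exact ⟨a, by rw [Function.update_self]⟩
    · have hia : i ≠ a := fun hh => hne (by rw [hh])
      exact ⟨i, by rw [Function.update_of_ne hia]⟩

lemma count_residues (N k : ℤ) (nn : ℕ) (hk : 0 < k) (hnn : k * nn = N) (j : ℤ)
    (hj0 : 0 ≤ j) (hjk : j < k) :
    ((Finset.Ico (0:ℤ) N).filter (fun q => q % k = j)).card = nn := by
  have hNk : (0:ℤ) ≤ N := by nlinarith [Int.ofNat_nonneg nn]
  have himg : (Finset.Ico (0:ℤ) N).filter (fun q => q % k = j)
      = (Finset.Ico (0:ℤ) (nn:ℤ)).image (fun t => j + k * t) := by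
    ext q
    simp only [Finset.mem_filter, Finset.mem_Ico, Finset.mem_image]
    constructor
    · rintro ⟨⟨h0, h1⟩, hq⟩
      refine ⟨q / k, ⟨Int.ediv_nonneg h0 hk.le, ?_⟩, ?_⟩
      · rw [Int.ediv_lt_iff_lt_mul hk]
        nlinarith
      · have := Int.mul_ediv_add_emod q k
        omega
    · rintro ⟨t, ⟨h0, h1⟩, rfl⟩
      have h2 : k * t ≤ k * ((nn:ℤ) - 1) := by nlinarith
      refine ⟨⟨by nlinarith, by nlinarith⟩, ?_⟩
      rw [show j + k * t = j + t * k by ring, Int.add_mul_emod_self_right]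
      exact Int.emod_eq_of_lt hj0 hjk
  rw [himg, Finset.card_image_of_injOn (fun t1 _ t2 _ h => by
    have : k * t1 = k * t2 := by omega
    exact mul_left_cancel₀ hk.ne' this), Int.card_Ico]
  omega

lemma card_filter_image_mod (y : ℕ) (N : ℤ) (B : Fin y → ℤ)
    (hinj : ∀ i i' : Fin y, B i % N = B i' % N → i = i') (pred : ℤ → Prop)
    [DecidablePred pred] :
    (Finset.univ.filter (fun i : Fin y => pred (B i % N))).card
      = ((Finset.univ.image (fun i : Fin y => B i % N)).filter pred).card := by
  rw [Finset.filter_image, Finset.card_image_of_injOn (fun i hi j hj hij =>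
    hinj i j hij)]

end GPT

namespace GPT

lemma chain_beads (x y k : ℕ) (hy : 0 < y) (hk : 0 < k) (N : ℤ) (hN : N = (x:ℤ) + y)
    (hkN : (k:ℤ) < N) (hdvdZ : (k:ℤ) ∣ N) (nn : ℕ) (hnn : (k:ℤ) * nn = N)
    (mu : ℤ → ℤ)
    (s : ℕ) (c : ℕ → ℤ → ℤ) (hc0 : c 0 = mu) :
    (∀ m ≤ s, (∀ i, c m i ≤ c m (i + 1)) ∧ (∀ i, c m (i + (y:ℤ)) = c m i + x)) →
    (∀ m < s, IsKRibbon x y k (c m) (c (m + 1))) →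
    ∃ B : Fin y → ℤ,
      (∀ i i' : Fin y, B i % N = B i' % N → i = i') ∧
      (∀ i : Fin y, B i % k = ((i:ℤ) + mu (i:ℤ)) % k) ∧
      (Finset.univ.image (fun i => B i % N) = resSet N y (c s)) ∧
      (∀ i : Fin y, ((Finset.univ.filter
          (fun i' : Fin y => ((i':ℤ) + mu (i':ℤ)) % k = ((i:ℤ) + mu (i:ℤ)) % k)).card = nn)
          → B i = (i:ℤ) + mu (i:ℤ)) ∧
      ((totalHeight y s c : ZMod 2)
        = Phi N k (fun i : Fin y => (i:ℤ) + mu (i:ℤ)) B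
          - Phi N k (fun i : Fin y => (i:ℤ) + mu (i:ℤ)) (fun i : Fin y => (i:ℤ) + mu (i:ℤ))) := by
  classical
  have hN0 : (0:ℤ) < N := by
    have : (0:ℤ) < k := by exact_mod_cast hk
    omega
  have hk0Z : (0:ℤ) < k := by exact_mod_cast hk
  set B₀ : Fin y → ℤ := fun i : Fin y => (i:ℤ) + mu (i:ℤ) with hB₀
  induction s with
  | zero =>
    intro hmono _
    have hmu := hmono 0 (le_refl 0)
    rw [hc0] at hmu
    refine ⟨B₀, ?_, fun i => rfl, ?_, fun i _ => rfl, ?_⟩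
    · intro i i' h
      have hmem : ∀ z : Fin y, (z:ℤ) ∈ Finset.Ico (0:ℤ) (0 + (y:ℤ)) := by
        intro z
        simp only [Finset.mem_Ico]
        have := z.isLt
        constructor
        · positivity
        · omega
      have := pos_inj x y N hN mu hmu.1 hmu.2 0 (i:ℤ) (i':ℤ) (hmem i) (hmem i') h
      exact Fin.ext (by exact_mod_cast this)
    · rw [hc0]
      exact finimage y (fun z => (z + mu z) % N)
    · simp [totalHeight]
  | succ s ih =>
    intro hmono hribs
    obtain ⟨B, hinj, hcls, himg, hfull, hPhi⟩ :=
      ih (fun m hm => hmono m (by omega)) (fun m hm => hribs m (by omega))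
    have hms := hmono s (by omega)
    have hms1 := hmono (s+1) (le_refl _)
    rcases ribbon_analysis x y k hy hk N hN (c s) (c (s+1)) hms.1 hms.2 hms1.1 hms1.2
        (hribs s (by omega)) with ⟨hkn', _⟩ | ⟨_, p, hp1, hp2, hp3, hp4⟩
    · omega
    · rw [← himg] at hp1
      obtain ⟨a, _, ha⟩ := Finset.mem_image.mp hp1
      have hBap : N ∣ (B a - p) :=
        Int.dvd_of_emod_eq_zero (Int.emod_eq_emod_iff_emod_sub_eq_zero.mp ha)
      have hfresh : ∀ q ∈ Finset.univ.image (fun i : Fin y => B i % N),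
          (q - (p + (k:ℤ))) % N ≠ 0 := by
        intro q hq
        exact hp2 q (himg ▸ hq)
      have hfree : ∀ i, B i % N ≠ (B a + (k:ℤ)) % N := by
        intro i heq
        apply hfresh (B i % N) (Finset.mem_image_of_mem _ (Finset.mem_univ i))
        rw [emod_sub_left]
        have h1 : N ∣ (B i - (B a + k)) :=
          Int.dvd_of_emod_eq_zero (Int.emod_eq_emod_iff_emod_sub_eq_zero.mp heq)
        have h2 : N ∣ (B i - (p + k)) := by
          have := dvd_add h1 hBap
          rwa [show B i - (B a + (k:ℤ)) + (B a - p) = B i - (p + k) by ring] at this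
        exact Int.emod_eq_zero_of_dvd h2
      have hkp : (k:ℤ) ∣ (B a - p) := dvd_trans hdvdZ hBap
      have hclassa : (Finset.univ.filter
          (fun i' : Fin y => B₀ i' % k = B₀ a % k)).card ≠ nn := by
        intro hcard
        have hj0 : 0 ≤ B₀ a % k := Int.emod_nonneg _ hk0Z.ne'
        have hjk : B₀ a % k < k := Int.emod_lt_of_pos _ hk0Z
        have hcf : (Finset.univ.filter (fun i' : Fin y => B₀ i' % k = B₀ a % k)).card
            = ((Finset.univ.image (fun i : Fin y => B i % N)).filter
                (fun q => q % k = B₀ a % k)).card := by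
          rw [← card_filter_image_mod y N B hinj (fun q => q % k = B₀ a % k)]
          congr 1
          apply Finset.filter_congr
          intro i _
          rw [Int.emod_emod_of_dvd _ hdvdZ, hcls i]
        have hsub : ((Finset.univ.image (fun i : Fin y => B i % N)).filter
              (fun q => q % k = B₀ a % k))
            ⊆ (Finset.Ico (0:ℤ) N).filter (fun q => q % k = B₀ a % k) := by
          intro q hq
          obtain ⟨hq1, hq2⟩ := Finset.mem_filter.mp hq
          obtain ⟨i, _, rfl⟩ := Finset.mem_image.mp hq1
          refine Finset.mem_filter.mpr ⟨?_, hq2⟩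
          simp only [Finset.mem_Ico]
          exact ⟨Int.emod_nonneg _ hN0.ne', Int.emod_lt_of_pos _ hN0⟩
        have hallcard := count_residues N k nn hk0Z hnn (B₀ a % k) hj0 hjk
        have heqset : ((Finset.univ.image (fun i : Fin y => B i % N)).filter
              (fun q => q % k = B₀ a % k))
            = (Finset.Ico (0:ℤ) N).filter (fun q => q % k = B₀ a % k) := by
          apply Finset.eq_of_subset_of_card_le hsub
          rw [hallcard, ← hcf, hcard]
        have hmm : ((p + (k:ℤ)) % N) ∈ (Finset.Ico (0:ℤ) N).filter
            (fun q => q % k = B₀ a % k) := by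
          refine Finset.mem_filter.mpr ⟨?_, ?_⟩
          · simp only [Finset.mem_Ico]
            exact ⟨Int.emod_nonneg _ hN0.ne', Int.emod_lt_of_pos _ hN0⟩
          · rw [Int.emod_emod_of_dvd _ hdvdZ,
              show p + (k:ℤ) = p + (k:ℤ) * 1 by ring, Int.add_mul_emod_self_left]
            have : p % k = B a % k :=
              (Int.emod_eq_emod_iff_emod_sub_eq_zero.mpr
                (Int.emod_eq_zero_of_dvd hkp)).symm
            rw [this, hcls a]
        rw [← heqset] at hmm
        obtain ⟨hmem, _⟩ := Finset.mem_filter.mp hmm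
        apply hfresh _ hmem
        rw [emod_sub_left, sub_self, Int.zero_emod]
      set B' := Function.update B a (B a + (k:ℤ)) with hB'
      have hinj' : ∀ i i' : Fin y, B' i % N = B' i' % N → i = i' := by
        intro i i' heq
        rw [hB'] at heq
        by_cases hi : i = a <;> by_cases hi' : i' = a
        · rw [hi, hi']
        · rw [hi, Function.update_self, Function.update_of_ne hi'] at heq
          exact absurd heq.symm (hfree i')
        · rw [hi', Function.update_self, Function.update_of_ne hi] at heq
          exact absurd heq (hfree i)
        · rw [Function.update_of_ne hi, Function.update_of_ne hi'] at heq
          exact hinj i i' heq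
      have hcls' : ∀ i : Fin y, B' i % k = B₀ i % k := by
        intro i
        rw [hB']
        by_cases hi : i = a
        · rw [hi, Function.update_self,
            show B a + (k:ℤ) = B a + (k:ℤ) * 1 by ring, Int.add_mul_emod_self_left]
          exact hcls a
        · rw [Function.update_of_ne hi]
          exact hcls i
      have himg' : Finset.univ.image (fun i => B' i % N) = resSet N y (c (s+1)) := by
        rw [hB', image_update_mod y N B hinj a (B a + (k:ℤ)), himg, ha, hp3]
        congr 1
        apply Int.emod_eq_emod_iff_emod_sub_eq_zero.mpr
        apply Int.emod_eq_zero_of_dvd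
        rwa [show B a + (k:ℤ) - (p + (k:ℤ)) = B a - p by ring]
      refine ⟨B', hinj', hcls', himg', ?_, ?_⟩
      · intro i hcard
        by_cases hi : i = a
        · exfalso
          apply hclassa
          rw [← hi]
          exact hcard
        · rw [hB', Function.update_of_ne hi]
          exact hfull i hcard
      · have hmove := Phi_move N k B₀ B hN0 hk0Z hkN hdvdZ hcls hinj a hfree
        have hsame : ∀ z : ℤ, (z - B a) % N = (z - p) % N := by
          intro z
          apply Int.emod_eq_emod_iff_emod_sub_eq_zero.mpr
          rw [show z - B a - (z - p) = -(B a - p) by ring]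
          exact Int.emod_eq_zero_of_dvd hBap.neg_right
        have hcnt : (Finset.univ.filter
              (fun i : Fin y => 0 < (B i - B a) % N ∧ (B i - B a) % N < k)).card
            = ((resSet N y (c s)).filter
                (fun q => 0 < (q - p) % N ∧ (q - p) % N < (k:ℤ))).card := by
          rw [← himg,
            ← card_filter_image_mod y N B hinj (fun q => 0 < (q - p) % N ∧ (q - p) % N < (k:ℤ))]
          congr 1
          apply Finset.filter_congr
          intro i _
          rw [emod_sub_left N (B i) p, hsame (B i)]
        have htot : totalHeight y (s+1) c
            = totalHeight y s c + ribbonHeight y (c s) (c (s+1)) := by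
          rw [totalHeight, totalHeight, Finset.sum_range_succ]
        rw [htot]
        push_cast
        rw [hPhi, hp4, hB', hmove, hcnt]
        ring
   
end GPT

namespace GPT

lemma boxes (x y k : ℕ) (s : ℕ) (c : ℕ → ℤ → ℤ)
    (hribs : ∀ m < s, IsKRibbon x y k (c m) (c (m + 1))) :
    ∑ i ∈ Finset.Ico (0:ℤ) (y:ℤ), (c s i - c 0 i) = (s:ℤ) * k := by
  induction s with
  | zero => simp
  | succ s ih =>
    have hsum := (hribs s (by omega)).2.1
    have ih' := ih (fun m hm => hribs m (by omega))
    have hint : ∀ i ∈ Finset.Ico (0:ℤ) (y:ℤ),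
        c (s+1) i - c 0 i = (c (s+1) i - c s i) + (c s i - c 0 i) := fun i _ => by ring
    rw [Finset.sum_congr rfl hint, Finset.sum_add_distrib, hsum, ih']
    push_cast
    ring

end GPT


theorem goodPair_tiling_parity (x y k : ℕ) (hy : 0 < y) (hk : 0 < k)
    (hdvd : k ∣ x + y)
    (lam mu : ℤ → ℤ)
    (hlam : ∀ i, lam i ≤ lam (i + 1)) (hlamp : ∀ i, lam (i + y) = lam i + x)
    (hmu : ∀ i, mu i ≤ mu (i + 1)) (hmup : ∀ i, mu (i + y) = mu i + x)
    (hsub : ∀ i, mu i ≤ lam i)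
    (hgood : GoodPair x y k lam)
    (s₁ s₂ : ℕ) (c₁ c₂ : ℕ → ℤ → ℤ)
    (h₁ : IsTiling x y k mu lam s₁ c₁) (h₂ : IsTiling x y k mu lam s₂ c₂) :
    totalHeight y s₁ c₁ % 2 = totalHeight y s₂ c₂ % 2 := by
  classical
  obtain ⟨hc0₁, hcs₁, hmono₁, hribs₁⟩ := h₁
  obtain ⟨hc0₂, hcs₂, hmono₂, hribs₂⟩ := h₂
  set N : ℤ := (x:ℤ) + y with hNdef
  have hN : N = (x:ℤ) + y := rfl
  have hN0 : (0:ℤ) < N := by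
    have : (0:ℤ) < (y:ℤ) := by exact_mod_cast hy
    have : (0:ℤ) ≤ (x:ℤ) := by positivity
    omega
  have hk0Z : (0:ℤ) < (k:ℤ) := by exact_mod_cast hk
  set nn : ℕ := (x + y) / k with hnndef
  have hnnN : k * nn = x + y := Nat.mul_div_cancel' hdvd
  have hnnZ : (k:ℤ) * nn = N := by
    rw [hN]
    exact_mod_cast congrArg (Nat.cast : ℕ → ℤ) hnnN
  have hdvdZ : (k:ℤ) ∣ N := ⟨nn, hnnZ.symm⟩
  have hkleN : (k:ℤ) ≤ N := Int.le_of_dvd hN0 hdvdZ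
  rcases eq_or_lt_of_le hkleN with hkeq | hklt
  · -- every ribbon is a loop; heights are s * y and the number of steps is fixed
    have hheight : ∀ (s : ℕ) (c : ℕ → ℤ → ℤ),
        (∀ m ≤ s, (∀ i, c m i ≤ c m (i + 1)) ∧ (∀ i, c m (i + (y:ℤ)) = c m i + x)) →
        (∀ m < s, IsKRibbon x y k (c m) (c (m + 1))) →
        totalHeight y s c = s * y := by
      intro s c hmono hribs
      have hh : ∀ m ∈ Finset.range s, ribbonHeight y (c m) (c (m+1)) = y := by
        intro m hm
        rw [Finset.mem_range] at hm
        rcases GPT.ribbon_analysis x y k hy hk N hN (c m) (c (m+1))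
            (hmono m (by omega)).1 (hmono m (by omega)).2
            (hmono (m+1) (by omega)).1 (hmono (m+1) (by omega)).2
            (hribs m hm) with ⟨_, h⟩ | ⟨hlt, _⟩
        · exact h
        · omega
      rw [totalHeight, Finset.sum_congr rfl hh, Finset.sum_const, Finset.card_range,
        smul_eq_mul]
    have hb₁ := GPT.boxes x y k s₁ c₁ hribs₁
    have hb₂ := GPT.boxes x y k s₂ c₂ hribs₂
    rw [hc0₁, hcs₁] at hb₁
    rw [hc0₂, hcs₂] at hb₂
    have hs : s₁ = s₂ := by
      have : (s₁:ℤ) * k = (s₂:ℤ) * k := by rw [← hb₁, ← hb₂]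
      have := mul_right_cancel₀ hk0Z.ne' this
      exact_mod_cast this
    rw [hheight s₁ c₁ hmono₁ hribs₁, hheight s₂ c₂ hmono₂ hribs₂, hs]
  · -- main case `k < N`
    obtain ⟨B₁, hinj₁, hcls₁, himg₁, hfull₁, hPhi₁⟩ :=
      GPT.chain_beads x y k hy hk N hN hklt hdvdZ nn hnnZ mu s₁ c₁ hc0₁ hmono₁ hribs₁
    obtain ⟨B₂, hinj₂, hcls₂, himg₂, hfull₂, hPhi₂⟩ :=
      GPT.chain_beads x y k hy hk N hN hklt hdvdZ nn hnnZ mu s₂ c₂ hc0₂ hmono₂ hribs₂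
    rw [hcs₁] at himg₁
    rw [hcs₂] at himg₂
    set B₀ : Fin y → ℤ := fun i : Fin y => (i:ℤ) + mu (i:ℤ) with hB₀
    -- class counts equal yCnt
    have hclscnt : ∀ i : Fin y,
        (Finset.univ.filter (fun i' : Fin y => B₀ i' % k = B₀ i % k)).card
          = yCnt y lam k (B₀ i % k) := by
      intro i
      have h1 : (Finset.univ.filter (fun i' : Fin y => B₀ i' % k = B₀ i % k)).card
          = ((Finset.univ.image (fun i' : Fin y => B₁ i' % N)).filter
              (fun q => q % k = B₀ i % k)).card := by
        rw [← GPT.card_filter_image_mod y N B₁ hinj₁ (fun q => q % k = B₀ i % k)]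
        congr 1
        apply Finset.filter_congr
        intro i' _
        rw [Int.emod_emod_of_dvd _ hdvdZ, hcls₁ i']
      rw [h1, himg₁, GPT.resSet]
      rw [Finset.filter_image, Finset.card_image_of_injOn (fun z hz w hw hzw =>
        GPT.pos_inj x y N hN lam hlam hlamp 0 z w
          (by have := Finset.mem_of_mem_filter _ hz; simpa using this)
          (by have := Finset.mem_of_mem_filter _ hw; simpa using this) hzw)]
      rw [yCnt]
      congr 1
      apply Finset.filter_congr
      intro z _
      rw [Int.emod_emod_of_dvd _ hdvdZ]
    -- goodness per label
    have hgood' : ∀ i : Fin y, ((GPT.wgt (k:ℤ) B₀ i : ZMod 2) = 0) ∨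
        (B₁ i = B₀ i ∧ B₂ i = B₀ i) := by
      intro i
      have hj0 : 0 ≤ B₀ i % k := Int.emod_nonneg _ hk0Z.ne'
      have hjk : B₀ i % k < k := Int.emod_lt_of_pos _ hk0Z
      have hcc := hclscnt i
      have hmemi : i ∈ Finset.univ.filter (fun i' : Fin y => B₀ i' % k = B₀ i % k) :=
        Finset.mem_filter.mpr ⟨Finset.mem_univ i, rfl⟩
      have hpos : 0 < (Finset.univ.filter (fun i' : Fin y => B₀ i' % k = B₀ i % k)).card :=
        Finset.card_pos.mpr ⟨i, hmemi⟩
      have hwgt : GPT.wgt (k:ℤ) B₀ i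
          = y - (Finset.univ.filter (fun i' : Fin y => B₀ i' % k = B₀ i % k)).card := by
        have := Finset.card_filter_add_card_filter_not
          (s := (Finset.univ : Finset (Fin y)))
          (fun i' : Fin y => B₀ i % k = B₀ i' % k)
        rw [Finset.card_univ, Fintype.card_fin] at this
        have hsame : (Finset.univ.filter (fun i' : Fin y => B₀ i % k = B₀ i' % k)).card
            = (Finset.univ.filter (fun i' : Fin y => B₀ i' % k = B₀ i % k)).card := by
          congr 1
          apply Finset.filter_congr
          intro z _
          constructor
          · exact fun h => h.symm
          · exact fun h => h.symm
        rw [GPT.wgt]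
        omega
      rcases hgood (B₀ i % k) (by simp only [Finset.mem_Ico]; exact ⟨hj0, hjk⟩)
        with hcase | hcase | hcase
      · left
        rw [hwgt]
        have hle : (Finset.univ.filter (fun i' : Fin y => B₀ i' % k = B₀ i % k)).card ≤ y := by
          have := Finset.card_filter_le (Finset.univ : Finset (Fin y))
            (fun i' : Fin y => B₀ i' % k = B₀ i % k)
          rwa [Finset.card_univ, Fintype.card_fin] at this
        rw [show ((y - (Finset.univ.filter
            (fun i' : Fin y => B₀ i' % k = B₀ i % k)).card : ℕ) : ZMod 2)
          = (((y - (Finset.univ.filter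
            (fun i' : Fin y => B₀ i' % k = B₀ i % k)).card : ℕ) : ℕ) : ZMod 2) from rfl]
        rw [show (0 : ZMod 2) = ((0 : ℕ) : ZMod 2) by norm_num]
        rw [ZMod.natCast_eq_natCast_iff]
        rw [hcc] at hpos hle ⊢
        unfold Nat.ModEq
        omega
      · exfalso
        rw [hcc, hcase] at hpos
        exact lt_irrefl 0 hpos
      · right
        have hcard : (Finset.univ.filter
            (fun i' : Fin y => B₀ i' % k = B₀ i % k)).card = nn := by
          rw [hcc, hcase.1]
        exact ⟨hfull₁ i hcard, hfull₂ i hcard⟩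
    have hcompare := GPT.Phi_compare N (k:ℤ) hN0 hdvdZ B₀ B₁ B₂
      hcls₁ hcls₂ hinj₁ hinj₂ (by rw [himg₁, himg₂]) hgood'
    have hfinal : (totalHeight y s₁ c₁ : ZMod 2) = (totalHeight y s₂ c₂ : ZMod 2) := by
      rw [hPhi₁, hPhi₂, hcompare]
    have := (ZMod.natCast_eq_natCast_iff _ _ _).mp hfinal
    exact this
end

section
/- If D is an inner-strict cylindric diagram (inner boundary word alternating 1010...) with s rows that admits a valid k-ribbon tiling and k divides s, then k is odd and each part bnd_i of the k-partitioning of the outer boundary word of D contains exactly s/k ones; in particular (D,k) is a good pair. -/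
open Finset

lemma sum_Ico_int {M : Type*} [AddCommMonoid M] (F : ℤ → M) (a b : ℤ) :
    ∑ i ∈ Ico a b, F i = ∑ j ∈ range (b - a).toNat, F (a + (j : ℤ)) := by
  refine Finset.sum_nbij' (fun i => (i - a).toNat) (fun j => a + (j : ℤ)) ?_ ?_ ?_ ?_ ?_
  · intro i hi; simp only [mem_Ico] at hi; simp only [mem_range]; omega
  · intro j hj; simp only [mem_range] at hj; simp only [mem_Ico]; omega
  · intro i hi; simp only [mem_Ico] at hi; show a + ((i - a).toNat : ℤ) = i; omega
  · intro j hj; simp only [mem_range] at hj; show ((a + (j:ℤ) - a).toNat) = j; omega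
  · intro i hi; simp only [mem_Ico] at hi
    have h : a + ((i - a).toNat : ℤ) = i := by omega
    rw [h]

lemma telescope_int (f : ℤ → ℤ) (a b : ℤ) (hab : a ≤ b) :
    ∑ i ∈ Ico a b, (f (i + 1) - f i) = f b - f a := by
  rw [sum_Ico_int (fun i => f (i + 1) - f i) a b]
  have key : ∀ j ∈ range (b - a).toNat,
      f (a + (j:ℤ) + 1) - f (a + (j:ℤ))
        = (fun n : ℕ => f (a + (n:ℤ))) (j + 1) - (fun n : ℕ => f (a + (n:ℤ))) j := by
    intro j _
    simp only
    congr 2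
    push_cast; ring
  rw [Finset.sum_congr rfl key, Finset.sum_range_sub (fun n : ℕ => f (a + (n:ℤ)))]
  have h : a + (((b - a).toNat : ℕ) : ℤ) = b := by omega
  rw [h]
  simp

lemma sum_Ico_shift {M : Type*} [AddCommMonoid M] (H : ℤ → M) (a b : ℤ) :
    ∑ i ∈ Ico a b, H (i + 1) = ∑ i ∈ Ico (a + 1) (b + 1), H i := by
  rw [sum_Ico_int (fun i => H (i + 1)) a b, sum_Ico_int H (a + 1) (b + 1)]
  rw [show b + 1 - (a + 1) = b - a by ring]
  exact Finset.sum_congr rfl (fun j _ => by congr 1; ring)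

lemma Ico_int_singleton (a : ℤ) : Ico a (a + 1) = {a} := by
  ext t; simp only [mem_Ico, mem_singleton]; omega

lemma window_one {M : Type*} [AddCancelCommMonoid M] (F : ℤ → M) (y : ℕ)
    (hF : ∀ i, F (i + y) = F i) (a : ℤ) :
    ∑ i ∈ Ico (a + 1) (a + 1 + y), F i = ∑ i ∈ Ico a (a + y), F i := by
  rcases Nat.eq_zero_or_pos y with h0 | hy
  · subst h0; simp
  have hy' : (1:ℤ) ≤ y := by exact_mod_cast hy
  have e1 : ∑ i ∈ Ico a (a + y), F i = F a + ∑ i ∈ Ico (a + 1) (a + y), F i := by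
    rw [← Finset.Ico_union_Ico_eq_Ico (show a ≤ a + 1 by omega) (show a + 1 ≤ a + y by omega),
      Finset.sum_union (Finset.Ico_disjoint_Ico_consecutive a (a+1) (a+y)),
      Ico_int_singleton, Finset.sum_singleton]
  have e2 : ∑ i ∈ Ico (a + 1) (a + 1 + y), F i
      = (∑ i ∈ Ico (a + 1) (a + y), F i) + F (a + y) := by
    rw [show a + 1 + (y:ℤ) = (a + y) + 1 by ring,
      ← Finset.Ico_union_Ico_eq_Ico (show a + 1 ≤ a + y by omega) (show a + y ≤ a + y + 1 by omega),
      Finset.sum_union (Finset.Ico_disjoint_Ico_consecutive (a+1) (a+y) (a+y+1)),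
      Ico_int_singleton, Finset.sum_singleton]
  rw [e1, e2, hF a, add_comm]

lemma window_shift {M : Type*} [AddCancelCommMonoid M] (F : ℤ → M) (y : ℕ)
    (hF : ∀ i, F (i + y) = F i) (a : ℤ) :
    ∑ i ∈ Ico a (a + y), F i = ∑ i ∈ Ico (0:ℤ) (y:ℤ), F i := by
  induction a using Int.induction_on with
  | zero => simp
  | succ n ih => rw [window_one F y hF (n:ℤ)]; exact ih
  | pred n ih =>
    have h := window_one F y hF (-(n:ℤ) - 1)
    rw [show -(n:ℤ) - 1 + 1 = -(n:ℤ) by ring] at h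
    rw [← h]; exact ih

lemma per_iter (f : ℤ → ℤ) (y : ℕ) (hf : ∀ i, f (i + y) = f i + y) :
    ∀ (n i : ℤ), f (i + n * y) = f i + n * y := by
  intro n
  induction n using Int.induction_on with
  | zero => simp
  | succ m ih =>
    intro i
    rw [show i + ((m:ℤ) + 1) * y = (i + m * y) + y by ring, hf, ih]
    ring
  | pred m ih =>
    intro i
    have h2 := hf (i + (-(m:ℤ) - 1) * y)
    rw [show (i + (-(m:ℤ) - 1) * y) + y = i + (-(m:ℤ)) * y by ring] at h2
    have h3 := ih i
    have h4 : (-(m:ℤ) - 1) * y = (-(m:ℤ)) * y - y := by ring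
    linarith

lemma lin_of_stair (f : ℤ → ℤ) (hf : ∀ i, f (i + 1) = f i + 1) :
    ∀ n : ℤ, f n = f 0 + n := by
  intro n
  induction n using Int.induction_on with
  | zero => simp
  | succ m ih => rw [hf m, ih]; ring
  | pred m ih =>
    have h := hf (-(m:ℤ) - 1)
    rw [show -(m:ℤ) - 1 + 1 = -(m:ℤ) by ring] at h
    linarith

lemma decomp (y : ℕ) (hy : 0 < y) (i : ℤ) :
    ∃ r q : ℤ, 0 ≤ r ∧ r < y ∧ i = r + q * y := by
  refine ⟨i % y, i / y, Int.emod_nonneg _ (by positivity), ?_, ?_⟩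
  · exact Int.emod_lt_of_pos _ (by exact_mod_cast hy)
  · have hdm := Int.mul_ediv_add_emod i (y:ℤ)
    linarith [mul_comm ((y:ℤ)) (i / (y:ℤ))]

lemma ribbon_struct (y k : ℕ) (hy : 0 < y) (hk : 0 < k) (hkdy : (k:ℤ) ∣ (y:ℤ))
    (ν ρ : ℤ → ℤ)
    (hνp : ∀ i, ν (i + y) = ν i + y)
    (hρp : ∀ i, ρ (i + y) = ρ i + y)
    (hrib : IsKRibbon y y k ν ρ) :
    ∃ a b : ℤ, a ≤ b ∧ b + 1 < a + y ∧
      (∀ i, a ≤ i → i ≤ b → ν i < ρ i) ∧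
      (∀ i, b < i → i < a + y → ν i = ρ i) ∧
      (∀ i, a ≤ i → i < b → ρ i = ν (i + 1) + 1) ∧
      b + ρ b = a + ν a + k := by
  obtain ⟨hle, hsum, h2x2, hconn, hint⟩ := hrib
  simp only [RowOcc] at hconn hint
  have occ_shift : ∀ (n i : ℤ), (ν (i + n * y) < ρ (i + n * y)) ↔ ν i < ρ i := by
    intro n i
    rw [per_iter ν y hνp n i, per_iter ρ y hρp n i]
    omega
  have occ_transfer : ∀ u i : ℤ, ∃ r : ℤ, u ≤ r ∧ r < u + y ∧ ((ν i < ρ i) ↔ (ν r < ρ r)) := by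
    intro u i
    obtain ⟨r, q, hr1, hr2, hiq⟩ := decomp y hy (i - u)
    refine ⟨u + r, by omega, by omega, ?_⟩
    have : i = (u + r) + q * y := by omega
    rw [this]
    exact occ_shift q (u + r)
  have hone : ∃ u, ν u < ρ u := by
    by_contra h
    push_neg at h
    have hz : ∑ i ∈ Finset.Ico (0:ℤ) (y:ℤ), (ρ i - ν i) = 0 :=
      Finset.sum_eq_zero (fun i _ => by have := h i; have := hle i; omega)
    rw [hsum] at hz
    have : k = 0 := by exact_mod_cast hz
    omega
  obtain ⟨u, hu⟩ := hone
  have hnotall : ∃ v, u < v ∧ v < u + y ∧ ¬ (ν v < ρ v) := by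
    by_contra h
    push_neg at h
    have hall : ∀ i, ν i < ρ i := by
      intro i
      obtain ⟨r, hr1, hr2, hiff⟩ := occ_transfer u i
      rw [hiff]
      rcases eq_or_lt_of_le hr1 with h' | h'
      · rw [← h']; exact hu
      · exact h r h' hr2
    have hstep : ∀ i, ρ i = ν (i + 1) + 1 := by
      intro i
      have h4 := hconn i (hall i) (hall (i + 1))
      have h3 := h2x2 i
      omega
    have heq : ∑ i ∈ Finset.Ico (0:ℤ) (y:ℤ), (ρ i - ν i)
        = ∑ i ∈ Finset.Ico (0:ℤ) (y:ℤ), ((ν (i + 1) - ν i) + 1) :=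
      Finset.sum_congr rfl (fun i _ => by rw [hstep i]; ring)
    rw [hsum, Finset.sum_add_distrib,
      telescope_int ν 0 y (by positivity), Finset.sum_const, Int.card_Ico] at heq
    have hνy : ν ((0:ℤ) + y) = ν 0 + y := hνp 0
    rw [show (0:ℤ) + (y:ℤ) = (y:ℤ) by ring] at hνy
    have hky : (k:ℤ) ≤ (y:ℤ) := Int.le_of_dvd (by exact_mod_cast hy) hkdy
    simp only [nsmul_eq_mul, mul_one] at heq
    omega
  obtain ⟨v, hv1, hv2, hv3⟩ := hnotall
  have hSne : ((Finset.Ico (v + 1) (v + y + 1)).filter (fun i => ν i < ρ i)).Nonempty := by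
    refine ⟨u + y, ?_⟩
    simp only [Finset.mem_filter, Finset.mem_Ico]
    refine ⟨⟨by omega, by omega⟩, ?_⟩
    rw [hνp, hρp]; omega
  obtain ⟨a, haMem, haMin⟩ := Finset.exists_min_image _ id hSne
  simp only [Finset.mem_filter, Finset.mem_Ico] at haMem
  obtain ⟨⟨hav, hav2⟩, haocc⟩ := haMem
  have hprev : ¬ (ν (a - 1) < ρ (a - 1)) := by
    rcases eq_or_lt_of_le (show v ≤ a - 1 by omega) with h' | h'
    · rw [← h']; exact hv3
    · intro hocc
      have hmem : a - 1 ∈ (Finset.Ico (v + 1) (v + y + 1)).filter (fun i => ν i < ρ i) := by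
        simp only [Finset.mem_filter, Finset.mem_Ico]
        exact ⟨⟨by omega, by omega⟩, hocc⟩
      have := haMin _ hmem
      simp only [id] at this
      omega
  have hy2 : (2:ℤ) ≤ (y:ℤ) := by omega
  have hTne : ((Finset.Ico a (a + y - 1)).filter (fun i => ν i < ρ i)).Nonempty := by
    refine ⟨a, ?_⟩
    simp only [Finset.mem_filter, Finset.mem_Ico]
    exact ⟨⟨le_refl a, by omega⟩, haocc⟩
  obtain ⟨b, hbMem, hbMax⟩ := Finset.exists_max_image _ id hTne
  simp only [Finset.mem_filter, Finset.mem_Ico] at hbMem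
  obtain ⟨⟨hab, hb2⟩, hbocc⟩ := hbMem
  have hbMax' : ∀ i, a ≤ i → i < a + y - 1 → ν i < ρ i → i ≤ b := by
    intro i h1 h2 hocc
    have hmem : i ∈ (Finset.Ico a (a + y - 1)).filter (fun i => ν i < ρ i) := by
      simp only [Finset.mem_filter, Finset.mem_Ico]
      exact ⟨⟨h1, h2⟩, hocc⟩
    have := hbMax _ hmem
    simpa using this
  have hbnext : ¬ (ν (b + 1) < ρ (b + 1)) := by
    intro hocc
    rcases lt_or_ge (b + 1) (a + y - 1) with h' | h'
    · have := hbMax' (b + 1) (by omega) h' hocc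
      omega
    · have h2 : ν (a - 1 + y) < ρ (a - 1 + y) := by
        rw [show a - 1 + (y:ℤ) = b + 1 by omega]; exact hocc
      rw [hνp, hρp] at h2
      exact hprev (by omega)
  have hcontig : ∀ i, a ≤ i → i ≤ b → ν i < ρ i := by
    intro m hm1 hm2
    rcases hint a b hab (by omega) haocc hbocc m hm1 hm2 with h | h
    · exact h
    · exact absurd (h (b + 1) (by omega) (by omega)) hbnext
  have hout : ∀ i, b < i → i < a + y → ν i = ρ i := by
    intro i hi1 hi2
    by_contra hne
    have hocc : ν i < ρ i := lt_of_le_of_ne (hle i) hne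
    rcases lt_or_ge i (a + y - 1) with h' | h'
    · have := hbMax' i (by omega) h' hocc
      omega
    · have h2 : ν (a - 1 + y) < ρ (a - 1 + y) := by
        rw [show a - 1 + (y:ℤ) = i by omega]; exact hocc
      rw [hνp, hρp] at h2
      exact hprev (by omega)
  have hstep : ∀ i, a ≤ i → i < b → ρ i = ν (i + 1) + 1 := by
    intro i h1 h2
    have o1 := hcontig i h1 (by omega)
    have o2 := hcontig (i + 1) (by omega) (by omega)
    have hc := hconn i o1 o2
    have hx := h2x2 i
    omega
  have hwin : ∑ i ∈ Finset.Ico a (a + y), (ρ i - ν i) = (k:ℤ) := by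
    rw [window_shift (fun i => ρ i - ν i) y
      (fun i => by show ρ (i + y) - ν (i + y) = ρ i - ν i; rw [hνp, hρp]; ring) a]
    exact hsum
  have hsplit : ∑ i ∈ Finset.Ico a (b + 1), (ρ i - ν i) = (k:ℤ) := by
    rw [← hwin, ← Finset.Ico_union_Ico_eq_Ico (show a ≤ b + 1 by omega) (show b + 1 ≤ a + y by omega),
      Finset.sum_union (Finset.Ico_disjoint_Ico_consecutive a (b+1) (a + y))]
    have hz : ∑ i ∈ Finset.Ico (b + 1) (a + y), (ρ i - ν i) = 0 :=
      Finset.sum_eq_zero (fun i hi => by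
        simp only [Finset.mem_Ico] at hi
        have := hout i (by omega) hi.2; omega)
    rw [hz, add_zero]
  have hsplit2 : ∑ i ∈ Finset.Ico a b, (ρ i - ν i) + (ρ b - ν b) = (k:ℤ) := by
    rw [← hsplit, ← Finset.Ico_union_Ico_eq_Ico (show a ≤ b by omega) (show b ≤ b + 1 by omega),
      Finset.sum_union (Finset.Ico_disjoint_Ico_consecutive a b (b+1)),
      Ico_int_singleton, Finset.sum_singleton]
  have hmid : ∑ i ∈ Finset.Ico a b, (ρ i - ν i) = (ν b - ν a) + (b - a) := by
    have he : ∑ i ∈ Finset.Ico a b, (ρ i - ν i)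
        = ∑ i ∈ Finset.Ico a b, ((ν (i + 1) - ν i) + 1) :=
      Finset.sum_congr rfl (fun i hi => by
        simp only [Finset.mem_Ico] at hi
        rw [hstep i hi.1 hi.2]; ring)
    rw [he, Finset.sum_add_distrib, telescope_int ν a b hab, Finset.sum_const, Int.card_Ico]
    simp only [nsmul_eq_mul, mul_one]
    omega
  exact ⟨a, b, hab, by omega, hcontig, hout, hstep, by omega⟩

lemma step_count (y k : ℕ) (hy : 0 < y) (hk : 0 < k) (hkdy : (k:ℤ) ∣ (y:ℤ))
    (ν ρ : ℤ → ℤ)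
    (hνp : ∀ i, ν (i + y) = ν i + y) (hρp : ∀ i, ρ (i + y) = ρ i + y)
    (hrib : IsKRibbon y y k ν ρ)
    (g : ℤ → ℕ) (hgk : ∀ t, g (t + k) = g t) (hg2y : ∀ t, g (t + 2 * (y:ℤ)) = g t) :
    ∑ i ∈ Finset.Ico (0:ℤ) (y:ℤ), g (i + ρ i) = ∑ i ∈ Finset.Ico (0:ℤ) (y:ℤ), g (i + ν i) := by
  obtain ⟨a, b, hab, hby, hcontig, hout, hstep, hsumk⟩ :=
    ribbon_struct y k hy hk hkdy ν ρ hνp hρp hrib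
  have hFρ : ∀ i : ℤ, g ((i + (y:ℤ)) + ρ (i + y)) = g (i + ρ i) := by
    intro i
    rw [hρp, show i + (y:ℤ) + (ρ i + y) = (i + ρ i) + 2 * (y:ℤ) by ring]
    exact hg2y _
  have hFν : ∀ i : ℤ, g ((i + (y:ℤ)) + ν (i + y)) = g (i + ν i) := by
    intro i
    rw [hνp, show i + (y:ℤ) + (ν i + y) = (i + ν i) + 2 * (y:ℤ) by ring]
    exact hg2y _
  rw [← window_shift (fun i => g (i + ρ i)) y hFρ a,
      ← window_shift (fun i => g (i + ν i)) y hFν a]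
  have e1 : ∑ i ∈ Finset.Ico a (a + y), g (i + ρ i)
      = (∑ i ∈ Finset.Ico a (b + 1), g (i + ρ i)) + ∑ i ∈ Finset.Ico (b+1) (a + y), g (i + ρ i) := by
    rw [← Finset.Ico_union_Ico_eq_Ico (show a ≤ b + 1 by omega) (show b + 1 ≤ a + y by omega),
      Finset.sum_union (Finset.Ico_disjoint_Ico_consecutive a (b+1) (a + y))]
  have e2 : ∑ i ∈ Finset.Ico a (a + y), g (i + ν i)
      = (∑ i ∈ Finset.Ico a (b + 1), g (i + ν i)) + ∑ i ∈ Finset.Ico (b+1) (a + y), g (i + ν i) := by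
    rw [← Finset.Ico_union_Ico_eq_Ico (show a ≤ b + 1 by omega) (show b + 1 ≤ a + y by omega),
      Finset.sum_union (Finset.Ico_disjoint_Ico_consecutive a (b+1) (a + y))]
  rw [e1, e2]
  have htail : ∑ i ∈ Finset.Ico (b+1) (a + y), g (i + ρ i)
      = ∑ i ∈ Finset.Ico (b+1) (a + y), g (i + ν i) :=
    Finset.sum_congr rfl (fun i hi => by
      simp only [Finset.mem_Ico] at hi
      rw [hout i (by omega) hi.2])
  rw [htail]
  congr 1
  have hL : ∑ i ∈ Finset.Ico a (b + 1), g (i + ρ i)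
      = (∑ i ∈ Finset.Ico a b, g (i + ρ i)) + g (b + ρ b) := by
    rw [← Finset.Ico_union_Ico_eq_Ico hab (show b ≤ b + 1 by omega),
      Finset.sum_union (Finset.Ico_disjoint_Ico_consecutive a b (b+1)),
      Ico_int_singleton, Finset.sum_singleton]
  have hR : ∑ i ∈ Finset.Ico a (b + 1), g (i + ν i)
      = g (a + ν a) + ∑ i ∈ Finset.Ico (a+1) (b + 1), g (i + ν i) := by
    rw [← Finset.Ico_union_Ico_eq_Ico (show a ≤ a + 1 by omega) (show a + 1 ≤ b + 1 by omega),
      Finset.sum_union (Finset.Ico_disjoint_Ico_consecutive a (a+1) (b+1)),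
      Ico_int_singleton, Finset.sum_singleton]
  rw [hL, hR]
  have hhead : ∑ i ∈ Finset.Ico a b, g (i + ρ i)
      = ∑ i ∈ Finset.Ico (a+1) (b + 1), g (i + ν i) := by
    rw [← sum_Ico_shift (fun t => g (t + ν t)) a b]
    refine Finset.sum_congr rfl (fun i hi => ?_)
    simp only [Finset.mem_Ico] at hi
    rw [hstep i hi.1 hi.2, show i + (ν (i+1) + 1) = (i+1) + ν (i+1) by ring]
  have hlast : g (b + ρ b) = g (a + ν a) := by
    rw [show b + ρ b = (a + ν a) + (k:ℤ) by omega]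
    exact hgk _
  rw [hhead, hlast, add_comm]

lemma tiling_invariant (y k : ℕ) (hy : 0 < y) (hk : 0 < k) (hkdy : (k:ℤ) ∣ (y:ℤ))
    (mu lam : ℤ → ℤ) (s : ℕ) (c : ℕ → ℤ → ℤ)
    (htile : IsTiling y y k mu lam s c)
    (g : ℤ → ℕ) (hgk : ∀ t, g (t + k) = g t) (hg2y : ∀ t, g (t + 2 * (y:ℤ)) = g t) :
    ∑ i ∈ Finset.Ico (0:ℤ) (y:ℤ), g (i + lam i) = ∑ i ∈ Finset.Ico (0:ℤ) (y:ℤ), g (i + mu i) := by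
  obtain ⟨h0, hs, hmono, hribs⟩ := htile
  have key : ∀ m, m ≤ s → ∑ i ∈ Finset.Ico (0:ℤ) (y:ℤ), g (i + c m i)
      = ∑ i ∈ Finset.Ico (0:ℤ) (y:ℤ), g (i + c 0 i) := by
    intro m
    induction m with
    | zero => intro _; rfl
    | succ n ih =>
      intro hns
      have h2 := hmono (n + 1) hns
      rw [step_count y k hy hk hkdy (c n) (c (n + 1)) (hmono n (by omega)).2 h2.2
        (hribs n (by omega)) g hgk hg2y]
      exact ih (by omega)
  rw [← h0, ← hs]
  exact key s le_rfl

lemma mu_count (y k : ℕ) (hy : 0 < y) (hk : 0 < k) (hkodd : Odd k) (hkdy : k ∣ y)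
    (c0 : ℤ) (j : ℤ) (hj1 : 0 ≤ j) (hj2 : j < k) :
    ((Finset.Ico (0:ℤ) (y:ℤ)).filter (fun i => (2 * i + c0) % k = j)).card = y / k := by
  obtain ⟨m, hm⟩ := hkodd
  have h2inv : 2 * ((m:ℤ) + 1) = (k:ℤ) + 1 := by
    have : (k:ℤ) = 2 * m + 1 := by exact_mod_cast hm
    omega
  set inv2 : ℤ := (m:ℤ) + 1 with hinv2
  set u0 : ℤ := ((j - c0) * inv2) % k with hu0
  have hkz : (k:ℤ) ≠ 0 := by positivity
  have hkpos : (0:ℤ) < k := by exact_mod_cast hk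
  have hu0n : 0 ≤ u0 := Int.emod_nonneg _ hkz
  have hu0k : u0 < k := Int.emod_lt_of_pos _ hkpos
  have hk1 : ((k:ℤ) + 1) ≡ 1 [ZMOD (k:ℤ)] := Int.modEq_iff_dvd.mpr ⟨-1, by ring⟩
  have hmod_u0 : u0 ≡ (j - c0) * inv2 [ZMOD (k:ℤ)] := Int.emod_emod_of_dvd _ dvd_rfl
  have fact1 : (2 * u0 + c0) % k = j := by
    have hA : (2 * u0 + c0) ≡ (2 * ((j - c0) * inv2) + c0) [ZMOD (k:ℤ)] :=
      (hmod_u0.mul_left 2).add_right c0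
    have hB : (2 * ((j - c0) * inv2) + c0) = (j - c0) * ((k:ℤ) + 1) + c0 := by
      rw [show 2 * ((j - c0) * inv2) = (j - c0) * (2 * inv2) by ring, h2inv]
    have hC : ((j - c0) * ((k:ℤ) + 1) + c0) ≡ ((j - c0) * 1 + c0) [ZMOD (k:ℤ)] :=
      (hk1.mul_left (j - c0)).add_right c0
    have hD : (2 * u0 + c0) ≡ j [ZMOD (k:ℤ)] := by
      calc (2 * u0 + c0) ≡ (2 * ((j - c0) * inv2) + c0) [ZMOD (k:ℤ)] := hA
        _ = (j - c0) * ((k:ℤ) + 1) + c0 := hB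
        _ ≡ (j - c0) * 1 + c0 [ZMOD (k:ℤ)] := hC
        _ = j := by ring
    have hDe : (2 * u0 + c0) % (k:ℤ) = j % (k:ℤ) := hD
    rwa [Int.emod_eq_of_lt hj1 hj2] at hDe
  have fact2 : ∀ i : ℤ, (2 * i + c0) % k = j → i % k = u0 := by
    intro i h
    have e1 : (2 * i + c0) ≡ (2 * u0 + c0) [ZMOD (k:ℤ)] := by
      show (2 * i + c0) % (k:ℤ) = (2 * u0 + c0) % k
      rw [h, fact1]
    have e2 : (2 * i : ℤ) ≡ 2 * u0 [ZMOD (k:ℤ)] := by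
      have := e1.sub_right c0
      simpa using this
    have e3 : inv2 * (2 * i) ≡ inv2 * (2 * u0) [ZMOD (k:ℤ)] := e2.mul_left inv2
    have hki : ∀ t : ℤ, t ≡ inv2 * (2 * t) [ZMOD (k:ℤ)] := by
      intro t
      refine Int.modEq_iff_dvd.mpr ⟨t, ?_⟩
      rw [show inv2 * (2 * t) = (2 * inv2) * t by ring, h2inv]
      ring
    have e4 : i ≡ u0 [ZMOD (k:ℤ)] := ((hki i).trans e3).trans (hki u0).symm
    have he4 : i % (k:ℤ) = u0 % (k:ℤ) := e4
    rwa [Int.emod_eq_of_lt hu0n hu0k] at he4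
  have hyk : (k:ℤ) * ((y / k : ℕ) : ℤ) = (y:ℤ) := by
    have h := Nat.div_mul_cancel hkdy
    rw [mul_comm]
    exact_mod_cast h
  rw [← Finset.card_range (y / k)]
  apply Finset.card_nbij' (fun i => ((i - u0) / k).toNat) (fun t => u0 + (k:ℤ) * (t:ℤ))
  · intro i hi
    simp only [Finset.mem_coe, Finset.mem_filter, Finset.mem_Ico] at hi
    obtain ⟨⟨hi0, hiy⟩, hicond⟩ := hi
    have hmod : i % k = u0 := fact2 i hicond
    have hdm := Int.mul_ediv_add_emod i (k:ℤ)
    rw [hmod] at hdm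
    have hq0 : 0 ≤ i / (k:ℤ) := by
      by_contra hcon
      push_neg at hcon
      have h2 : (k:ℤ) * (i / (k:ℤ)) ≤ (k:ℤ) * (-1) :=
        mul_le_mul_of_nonneg_left (by omega) (by omega)
      rw [mul_neg_one] at h2
      omega
    have hqlt : i / (k:ℤ) < ((y / k : ℕ) : ℤ) := by
      by_contra hcon
      push_neg at hcon
      have h2 : (k:ℤ) * ((y / k : ℕ) : ℤ) ≤ (k:ℤ) * (i / (k:ℤ)) :=
        mul_le_mul_of_nonneg_left hcon (by omega)
      omega
    have hieq : (i - u0) / (k:ℤ) = i / (k:ℤ) := by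
      rw [show i - u0 = (k:ℤ) * (i / (k:ℤ)) by omega]
      exact Int.mul_ediv_cancel_left _ hkz
    simp only [Finset.mem_coe, Finset.mem_range]
    rw [hieq]
    omega
  · intro t ht
    simp only [Finset.mem_coe, Finset.mem_range] at ht
    simp only [Finset.mem_coe, Finset.mem_filter, Finset.mem_Ico]
    have htk : (0:ℤ) ≤ (k:ℤ) * (t:ℤ) := by positivity
    have hup : (k:ℤ) * ((t:ℤ) + 1) ≤ (k:ℤ) * ((y / k : ℕ) : ℤ) := by
      apply mul_le_mul_of_nonneg_left _ (by omega)
      exact_mod_cast Nat.succ_le_of_lt ht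
    rw [mul_add, mul_one] at hup
    refine ⟨⟨by omega, by omega⟩, ?_⟩
    rw [show 2 * (u0 + (k:ℤ) * t) + c0 = (2 * u0 + c0) + (k:ℤ) * (2 * t) by ring,
      Int.add_mul_emod_self_left, fact1]
  · intro i hi
    simp only [Finset.mem_coe, Finset.mem_filter, Finset.mem_Ico] at hi
    obtain ⟨⟨hi0, hiy⟩, hicond⟩ := hi
    have hmod : i % k = u0 := fact2 i hicond
    have hdm := Int.mul_ediv_add_emod i (k:ℤ)
    rw [hmod] at hdm
    have hq0 : 0 ≤ i / (k:ℤ) := by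
      by_contra hcon
      push_neg at hcon
      have h2 : (k:ℤ) * (i / (k:ℤ)) ≤ (k:ℤ) * (-1) :=
        mul_le_mul_of_nonneg_left (by omega) (by omega)
      rw [mul_neg_one] at h2
      omega
    have hieq : (i - u0) / (k:ℤ) = i / (k:ℤ) := by
      rw [show i - u0 = (k:ℤ) * (i / (k:ℤ)) by omega]
      exact Int.mul_ediv_cancel_left _ hkz
    show u0 + (k:ℤ) * (((i - u0) / (k:ℤ)).toNat : ℤ) = i
    rw [hieq, Int.toNat_of_nonneg hq0]
    omega
  · intro t ht
    simp only [Finset.mem_coe, Finset.mem_range] at ht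
    show (((u0 + (k:ℤ) * (t:ℤ)) - u0) / (k:ℤ)).toNat = t
    rw [show (u0 + (k:ℤ) * (t:ℤ)) - u0 = (k:ℤ) * (t:ℤ) by ring,
      Int.mul_ediv_cancel_left _ hkz]
    simp


theorem inner_strict_good_pair (x y k : ℕ) (hy : 0 < y) (hk : 0 < k)
    (lam mu : ℤ → ℤ)
    (hlam : ∀ i, lam i ≤ lam (i + 1)) (hlamp : ∀ i, lam (i + y) = lam i + x)
    (hmup : ∀ i, mu (i + y) = mu i + x)
    (hsub : ∀ i, mu i ≤ lam i)
    -- inner-strict: the inner boundary word is the alternating word 1010…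
    (hstair : ∀ i, mu (i + 1) = mu i + 1)
    -- D has s = y rows
    (hrows : ∀ i, mu i < lam i)
    (hdvd : k ∣ y)
    (s : ℕ) (c : ℕ → ℤ → ℤ) (htile : IsTiling x y k mu lam s c) :
    Odd k ∧ (∀ j ∈ Finset.Ico (0 : ℤ) (k : ℤ), yCnt y lam k j = y / k) ∧
      GoodPair x y k lam := by

  have hmu_lin : ∀ i : ℤ, mu i = mu 0 + i := lin_of_stair mu hstair
  have hxy : y = x := by
    have h1 := hmup 0
    have h2 := hmu_lin (0 + (y:ℤ))
    have h3 := hmu_lin 0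
    have : (y:ℤ) = (x:ℤ) := by omega
    exact_mod_cast this
  subst hxy
  have hkdy : (k:ℤ) ∣ (y:ℤ) := Int.natCast_dvd_natCast.mpr hdvd
  -- Oddness of k
  have hkodd : Odd k := by
    rcases Nat.even_or_odd k with heven | hodd
    swap
    · exact hodd
    exfalso
    obtain ⟨h, hh⟩ := heven
    have hkint : (k:ℤ) = (h:ℤ) + (h:ℤ) := by exact_mod_cast hh
    set g2 : ℤ → ℕ := fun t => if t % 2 = mu 0 % 2 then 1 else 0 with hg2
    have hgk : ∀ t : ℤ, g2 (t + k) = g2 t := by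
      intro t; simp only [hg2]
      have he : (t + (k:ℤ)) % 2 = t % 2 := by omega
      rw [he]
    have hg2y : ∀ t : ℤ, g2 (t + 2 * (y:ℤ)) = g2 t := by
      intro t; simp only [hg2]
      have he : (t + 2 * (y:ℤ)) % 2 = t % 2 := by omega
      rw [he]
    have hinv := tiling_invariant y k hy hk hkdy mu lam s c htile g2 hgk hg2y
    have hmu_sum : ∑ i ∈ Finset.Ico (0:ℤ) (y:ℤ), g2 (i + mu i) = y := by
      have hall : ∀ i ∈ Finset.Ico (0:ℤ) (y:ℤ), g2 (i + mu i) = 1 := by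
        intro i _
        simp only [hg2, hmu_lin i]
        rw [if_pos (by omega)]
      rw [Finset.sum_congr rfl hall, Finset.sum_const, Int.card_Ico]
      simp
    rw [hmu_sum] at hinv
    have hall1 : ∀ i ∈ Finset.Ico (0:ℤ) (y:ℤ), g2 (i + lam i) = 1 := by
      by_contra hc
      push_neg at hc
      obtain ⟨i0, hi0, hne⟩ := hc
      have hlt : ∑ i ∈ Finset.Ico (0:ℤ) (y:ℤ), g2 (i + lam i)
          < ∑ i ∈ Finset.Ico (0:ℤ) (y:ℤ), 1 := by
        refine Finset.sum_lt_sum (fun i _ => by simp only [hg2]; split <;> omega)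
          ⟨i0, hi0, ?_⟩
        simp only [hg2] at hne ⊢
        by_cases hcond : (i0 + lam i0) % 2 = mu 0 % 2
        · simp [hcond] at hne
        · simp [hcond]
      rw [hinv, Finset.sum_const, Int.card_Ico, smul_eq_mul, mul_one] at hlt
      omega
    have hpar : ∀ i ∈ Finset.Ico (0:ℤ) (y:ℤ), (i + lam i) % 2 = mu 0 % 2 := by
      intro i hi
      have h1 := hall1 i hi
      simp only [hg2] at h1
      split at h1
      · assumption
      · omega
    have hpar_all : ∀ i : ℤ, (i + lam i) % 2 = mu 0 % 2 := by
      intro i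
      obtain ⟨r, q, hr1, hr2, rfl⟩ := decomp y hy i
      rw [per_iter lam y hlamp q r]
      have h1 := hpar r (by simp only [Finset.mem_Ico]; omega)
      omega
    have hd1 : ∀ i : ℤ, 1 ≤ lam (i + 1) - lam i := by
      intro i
      have p1 := hpar_all i
      have p2 := hpar_all (i + 1)
      have hm := hlam i
      omega
    have hsum_d : ∑ i ∈ Finset.Ico (0:ℤ) (y:ℤ), (lam (i + 1) - lam i) = y := by
      rw [telescope_int lam 0 y (by positivity)]
      have h := hlamp 0
      rw [show (0:ℤ) + (y:ℤ) = (y:ℤ) by ring] at h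
      omega
    have hone : ∀ i ∈ Finset.Ico (0:ℤ) (y:ℤ), lam (i + 1) - lam i = 1 := by
      by_contra hc
      push_neg at hc
      obtain ⟨i0, hi0, hne⟩ := hc
      have hlt : ∑ i ∈ Finset.Ico (0:ℤ) (y:ℤ), (1:ℤ)
          < ∑ i ∈ Finset.Ico (0:ℤ) (y:ℤ), (lam (i + 1) - lam i) :=
        Finset.sum_lt_sum (fun i _ => hd1 i) ⟨i0, hi0, by have := hd1 i0; omega⟩
      rw [hsum_d, Finset.sum_const, Int.card_Ico, nsmul_eq_mul, mul_one] at hlt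
      omega
    have hstair_lam : ∀ i : ℤ, lam (i + 1) = lam i + 1 := by
      intro i
      obtain ⟨r, q, hr1, hr2, rfl⟩ := decomp y hy i
      rw [show r + q * (y:ℤ) + 1 = (r + 1) + q * y by ring,
        per_iter lam y hlamp q (r + 1), per_iter lam y hlamp q r]
      have h1 := hone r (by simp only [Finset.mem_Ico]; omega)
      omega
    -- last ribbon
    obtain ⟨h0, hsfin, hmono, hribs⟩ := htile
    have hs1 : 1 ≤ s := by
      by_contra hs0
      push_neg at hs0
      have hs0' : s = 0 := by omega
      rw [hs0', h0] at hsfin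
      have := hrows 0
      rw [hsfin] at this
      omega
    have hlast : IsKRibbon y y k (c (s - 1)) lam := by
      have h := hribs (s - 1) (by omega)
      rw [show s - 1 + 1 = s by omega, hsfin] at h
      exact h
    obtain ⟨a, b, hab, hby, hcontig, hout, hstepr, hsumk⟩ :=
      ribbon_struct y k hy hk hkdy (c (s - 1)) lam (hmono (s - 1) (by omega)).2 hlamp hlast
    have hνper := (hmono (s - 1) (by omega)).2
    have hνmono := (hmono (s - 1) (by omega)).1
    have hout' : c (s - 1) (a - 1) = lam (a - 1) := by
      have h1 := hout (a - 1 + y) (by omega) (by omega)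
      have h2 := hνper (a - 1)
      have h3 := hlamp (a - 1)
      omega
    have hmono_a : c (s - 1) (a - 1) ≤ c (s - 1) a := by
      have := hνmono (a - 1)
      rwa [show a - 1 + 1 = a by ring] at this
    have hocc_a : c (s - 1) a < lam a := hcontig a le_rfl hab
    have hlam_a : lam (a - 1) + 1 = lam a := by
      have := hstair_lam (a - 1)
      rw [show a - 1 + 1 = a by ring] at this
      omega
    have hνa : c (s - 1) a = lam a - 1 := by omega
    have hlam_lin : lam b = lam a + (b - a) := by
      have hl := lin_of_stair lam hstair_lam
      rw [hl a, hl b]; ring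
    omega
  -- the counts
  have hcount : ∀ j ∈ Finset.Ico (0:ℤ) (k:ℤ), yCnt y lam k j = y / k := by
    intro j hj
    rw [Finset.mem_Ico] at hj
    set g : ℤ → ℕ := fun t => if t % k = j then 1 else 0 with hg
    have hgk : ∀ t, g (t + k) = g t := by
      intro t; simp only [hg]
      have he : (t + (k:ℤ)) % k = t % k := by
        rw [show t + (k:ℤ) = t + (k:ℤ) * 1 by ring, Int.add_mul_emod_self_left]
      rw [he]
    have hg2y : ∀ t, g (t + 2 * (y:ℤ)) = g t := by
      intro t; simp only [hg]
      obtain ⟨w, hw⟩ := hkdy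
      have he : (t + 2 * (y:ℤ)) % k = t % k := by
        rw [hw, show t + 2 * ((k:ℤ) * w) = t + (k:ℤ) * (2 * w) by ring, Int.add_mul_emod_self_left]
      rw [he]
    have hinv := tiling_invariant y k hy hk hkdy mu lam s c htile g hgk hg2y
    have hyl : yCnt y lam k j = ∑ i ∈ Finset.Ico (0:ℤ) (y:ℤ), g (i + lam i) := by
      rw [yCnt, Finset.card_filter]
    have hym : ∑ i ∈ Finset.Ico (0:ℤ) (y:ℤ), g (i + mu i) = y / k := by
      have he : ∑ i ∈ Finset.Ico (0:ℤ) (y:ℤ), g (i + mu i)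
          = ((Finset.Ico (0:ℤ) (y:ℤ)).filter (fun i => (2 * i + mu 0) % k = j)).card := by
        rw [Finset.card_filter]
        refine Finset.sum_congr rfl (fun i _ => ?_)
        simp only [hg, hmu_lin i]
        rw [show i + (mu 0 + i) = 2 * i + mu 0 by ring]
      rw [he, mu_count y k hy hk hkodd hdvd (mu 0) j hj.1 hj.2]
    rw [hyl, hinv, hym]
  refine ⟨hkodd, hcount, ?_⟩
  intro j hj
  left
  rw [hcount j hj]
  obtain ⟨m, hm⟩ := hdvd
  rw [hm, Nat.mul_div_cancel_left m hk]
  obtain ⟨t, ht⟩ := hkodd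
  rw [show k * m = 2 * (t * m) + m by rw [ht]; ring]
  omega
end
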